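/- arXiv:2304.01368 — 5 statements merged into one kernel-verified Lean document; each statement's English description precedes it below -/
import Mathlib

section
/- Let k ≥ 1 and let G be a 3k-connected finite simple graph with n = |V(G)| ≥ 4k vertices and a perfect matching M. Let D be an independent set of vertices of G containing at most one endpoint of each edge of M, with |D| = 2t for some t ≤ k. Then the induced subgraph G − D contains a spanning forest (an acyclic spanning subgraph) in which every vertex has degree 1 or 3. -/
/-! Definitions for the slow coloring game (sum-color cost), paintability,
connectivity and auxiliary graphs. -/

variable {V : Type*}

/-- `D` is a maximal independent subset of `M` with respect to `G`:
`D ⊆ M`, `D` is independent in `G`, and every vertex of `M \ D` has a neighbor in `D`. -/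
def SimpleGraph.MaxIndepSubset (G : SimpleGraph V) (M D : Finset V) : Prop :=
  D ⊆ M ∧ (∀ u ∈ D, ∀ v ∈ D, ¬ G.Adj u v) ∧ ∀ v ∈ M, v ∉ D → ∃ u ∈ D, G.Adj u v

/-- Fueled recursion computing the slow coloring number of the subgraph of `G`
induced on the vertex set `A`.  In each round Lister marks a nonempty `M ⊆ A`,
scoring `|M|`, and Painter deletes a maximal independent subset `D` of `M`
(such a `D` is necessarily nonempty, so the game ends within `A.card` rounds;
hence the value is correct whenever the fuel is at least `A.card`). -/
noncomputable def SimpleGraph.slowAux [DecidableEq V] (G : SimpleGraph V) :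
    ℕ → Finset V → ℕ
  | 0, _ => 0
  | fuel + 1, A =>
    (A.powerset.filter fun M => M.Nonempty).sup fun M =>
      M.card + sInf {m | ∃ D : Finset V, G.MaxIndepSubset M D ∧ m = G.slowAux fuel (A \ D)}

/-- The slow coloring number (sum-color cost) `𝓈(G)` of a finite simple graph `G`. -/
noncomputable def SimpleGraph.sumColorCost [Fintype V] [DecidableEq V]
    (G : SimpleGraph V) : ℕ :=
  G.slowAux (Fintype.card V) Finset.univ

/-- `G` is `m`-connected: it has more than `m` vertices and deleting any set of
fewer than `m` vertices leaves a connected graph. -/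
def SimpleGraph.MConnected [Fintype V] [DecidableEq V] (G : SimpleGraph V) (m : ℕ) : Prop :=
  m < Fintype.card V ∧
    ∀ S : Finset V, S.card < m →
      (G.induce ((Finset.univ \ S : Finset V) : Set V)).Connected

/-- The independence number `α(G)`: the maximum size of a set of pairwise
nonadjacent vertices. -/
noncomputable def SimpleGraph.indepNumber (G : SimpleGraph V) : ℕ :=
  sSup {n | ∃ s : Set V, (∀ u ∈ s, ∀ v ∈ s, ¬ G.Adj u v) ∧ s.ncard = n}

/-- Fueled recursion for the `f`-painting game of `G` restricted to the vertex
set `A`: the empty graph is `f`-paintable, and a nonempty graph is `f`-paintable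
iff every vertex has at least one token and, for every nonempty marked set `M`,
Painter can delete some maximal independent subset `D` of `M` so that the rest
is paintable after each vertex of `M \ D` loses a token. -/
def SimpleGraph.paintAux [DecidableEq V] (G : SimpleGraph V) :
    ℕ → Finset V → (V → ℕ) → Prop
  | 0, A, _ => A = ∅
  | fuel + 1, A, f =>
    A = ∅ ∨ ((∀ v ∈ A, 1 ≤ f v) ∧
      ∀ M ⊆ A, M.Nonempty → ∃ D : Finset V, G.MaxIndepSubset M D ∧
        G.paintAux fuel (A \ D) (fun v => if v ∈ M \ D then f v - 1 else f v))

/-- `G` is `f`-paintable. -/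
def SimpleGraph.Paintable [Fintype V] [DecidableEq V] (G : SimpleGraph V) (f : V → ℕ) : Prop :=
  G.paintAux (Fintype.card V) Finset.univ f

/-- The sum-paintability `χ_SP(G)`: the least total number of tokens `∑ v, f v`
over functions `f` for which `G` is `f`-paintable. -/
noncomputable def SimpleGraph.sumPaintability [Fintype V] [DecidableEq V]
    (G : SimpleGraph V) : ℕ :=
  sInf {s | ∃ f : V → ℕ, G.Paintable f ∧ s = ∑ v, f v}

/-- The triangular prism graph on vertices `0,…,5` (a triangle `0,1,2`, a
triangle `3,4,5`, and the matching `03, 14, 25`). -/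
def prismGraph : SimpleGraph (Fin 6) :=
  SimpleGraph.fromRel fun u v =>
    ((u : ℕ), (v : ℕ)) ∈ [(0,1), (1,2), (0,2), (3,4), (4,5), (3,5), (0,3), (1,4), (2,5)]

/-- The star `K_{1,n-1}` on `n` vertices, with center `0`. -/
def starGraph (n : ℕ) : SimpleGraph (Fin n) :=
  SimpleGraph.fromRel fun u _ => (u : ℕ) = 0

section MengerAux
set_option linter.unusedSectionVars false
set_option maxHeartbeats 1600000
open Finset
open scoped symmDiff

namespace MengerDev

variable {W : Type*} [Fintype W] [DecidableEq W]

/-- `X` separates `A` from `B` in `K`: every walk from `A` to `B` meets `X`. -/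
def IsSep (K : SimpleGraph W) (A B X : Finset W) : Prop :=
  ∀ a ∈ A, ∀ b ∈ B, ∀ p : K.Walk a b, ∃ x ∈ X, x ∈ p.support

/-- There are `s` pairwise vertex-disjoint `A`–`B` paths in `K`. -/
def Linkage (K : SimpleGraph W) (A B : Finset W) (s : ℕ) : Prop :=
  ∃ (a b : Fin s → W) (p : ∀ i, K.Walk (a i) (b i)),
    (∀ i, a i ∈ A) ∧ (∀ i, b i ∈ B) ∧ (∀ i, (p i).IsPath) ∧
    ∀ i j, i ≠ j → ∀ v, v ∈ (p i).support → v ∈ (p j).support → False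

/-- Take the prefix of a walk up to the first visit of the set `Y`. -/
lemma exists_firstHit {K : SimpleGraph W} {a b : W} (p : K.Walk a b) (Y : Finset W)
    (hp : ∃ w ∈ Y, w ∈ p.support) :
    ∃ w ∈ Y, ∃ q : K.Walk a w, (∀ v ∈ q.support, v ∈ p.support) ∧
      (∀ e ∈ q.edges, e ∈ p.edges) ∧ (∀ v ∈ q.support, v ∈ Y → v = w) := by
  induction p with
  | nil =>
    obtain ⟨w, hwY, hws⟩ := hp
    rw [SimpleGraph.Walk.support_nil, List.mem_singleton] at hws
    subst hws
    exact ⟨w, hwY, SimpleGraph.Walk.nil, by simp, by simp, by simp⟩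
  | @cons u v c h q ih =>
    by_cases hu : u ∈ Y
    · exact ⟨u, hu, SimpleGraph.Walk.nil, by simp, by simp,
        by simp⟩
    · have hp' : ∃ w ∈ Y, w ∈ q.support := by
        obtain ⟨w, hwY, hws⟩ := hp
        rw [SimpleGraph.Walk.support_cons, List.mem_cons] at hws
        rcases hws with rfl | hws
        · exact absurd hwY hu
        · exact ⟨w, hwY, hws⟩
      obtain ⟨w, hwY, q', hsup, hedg, hfirst⟩ := ih hp'
      refine ⟨w, hwY, SimpleGraph.Walk.cons h q', ?_, ?_, ?_⟩
      · intro x hx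
        rw [SimpleGraph.Walk.support_cons, List.mem_cons] at hx ⊢
        rcases hx with rfl | hx
        · exact Or.inl rfl
        · exact Or.inr (hsup x hx)
      · intro e he
        rw [SimpleGraph.Walk.edges_cons, List.mem_cons] at he ⊢
        rcases he with rfl | he
        · exact Or.inl rfl
        · exact Or.inr (hedg e he)
      · intro x hx hxY
        rw [SimpleGraph.Walk.support_cons, List.mem_cons] at hx
        rcases hx with rfl | hx
        · exact absurd hxY hu
        · exact hfirst x hx hxY

/-- Contraction of the edge `xy` onto `x`, leaving `y` isolated. -/
def contractEdge (K : SimpleGraph W) (x y : W) : SimpleGraph W where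
  Adj u v := u ≠ v ∧ u ≠ y ∧ v ≠ y ∧
    (K.Adj u v ∨ (u = x ∧ K.Adj y v) ∨ (v = x ∧ K.Adj u y))
  symm := by
    constructor
    rintro u v ⟨h1, h2, h3, h4⟩
    refine ⟨h1.symm, h3, h2, ?_⟩
    rcases h4 with h | ⟨rfl, h⟩ | ⟨rfl, h⟩
    · exact Or.inl h.symm
    · exact Or.inr (Or.inr ⟨rfl, h.symm⟩)
    · exact Or.inr (Or.inl ⟨rfl, h.symm⟩)
  loopless := by constructor; rintro u ⟨h1, -⟩; exact h1 rfl

variable {K : SimpleGraph W} {x y : W}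

/-- the projection map for a contraction -/
def cproj (x y : W) (w : W) : W := if w = y then x else w

lemma cproj_ne_y (hxy : x ≠ y) (w : W) : cproj x y w ≠ y := by
  unfold cproj; split <;> simp_all

lemma cproj_eq_cases (w u : W) (h : cproj x y w = u) : w = u ∨ (w = y ∧ u = x) := by
  unfold cproj at h; split at h <;> simp_all

@[simp] lemma cproj_y : cproj x y y = x := by simp [cproj]

lemma cproj_of_ne {w : W} (h : w ≠ y) : cproj x y w = w := by simp [cproj, h]

/-- Walks project along contractions. -/
lemma walk_proj (hne : x ≠ y) {a b : W} (p : K.Walk a b) :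
    ∃ q : (contractEdge K x y).Walk (cproj x y a) (cproj x y b),
      ∀ v ∈ q.support, ∃ v' ∈ p.support, cproj x y v' = v := by
  induction p with
  | nil => exact ⟨SimpleGraph.Walk.nil, by simp⟩
  | @cons u v c h q ih =>
    obtain ⟨q', hq'⟩ := ih
    by_cases heq : cproj x y u = cproj x y v
    · refine ⟨(q'.copy heq.symm rfl), ?_⟩
      intro w hw
      rw [SimpleGraph.Walk.support_copy] at hw
      obtain ⟨v', hv', rfl⟩ := hq' w hw
      exact ⟨v', by simp [hv'], rfl⟩
    · have hadj : (contractEdge K x y).Adj (cproj x y u) (cproj x y v) := by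
        refine ⟨heq, cproj_ne_y hne u, cproj_ne_y hne v, ?_⟩
        rcases cproj_eq_cases (x := x) (y := y) u (cproj x y u) rfl with hu | ⟨huy, hux⟩ <;>
          rcases cproj_eq_cases (x := x) (y := y) v (cproj x y v) rfl with hv | ⟨hvy, hvx⟩
        · exact Or.inl (by rw [← hu, ← hv]; exact h)
        · refine Or.inr (Or.inr ⟨hvx, ?_⟩)
          rw [← hu]; rw [hvy] at h; exact h
        · refine Or.inr (Or.inl ⟨hux, ?_⟩)
          rw [← hv]; rw [huy] at h; exact h
        · rw [hux, hvx] at heq; exact absurd rfl heq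
      refine ⟨SimpleGraph.Walk.cons hadj q', ?_⟩
      intro w hw
      rw [SimpleGraph.Walk.support_cons, List.mem_cons] at hw
      rcases hw with rfl | hw
      · exact ⟨u, by simp, rfl⟩
      · obtain ⟨v', hv', rfl⟩ := hq' w hw
        exact ⟨v', by simp [hv'], rfl⟩

/-- Walks lift along contractions. -/
lemma walk_lift (hxy : K.Adj x y) {a₁ b₁ : W}
    (q : (contractEdge K x y).Walk a₁ b₁) :
    ∀ a : W, cproj x y a = a₁ → ∃ b : W, cproj x y b = b₁ ∧ ∃ p : K.Walk a b,
      ∀ v ∈ p.support, cproj x y v ∈ q.support := by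
  induction q with
  | nil =>
    intro a ha
    exact ⟨a, ha, SimpleGraph.Walk.nil, by simp [ha]⟩
  | @cons u v c h q ih =>
    intro a ha
    obtain ⟨hne, huy, hvy, hcase⟩ := h
    have hstep : ∃ u' v', cproj x y u' = u ∧ cproj x y v' = v ∧ K.Adj u' v' := by
      rcases hcase with h | ⟨rfl, h⟩ | ⟨rfl, h⟩
      · exact ⟨u, v, cproj_of_ne huy, cproj_of_ne hvy, h⟩
      · exact ⟨y, v, by simp, cproj_of_ne hvy, h⟩
      · exact ⟨u, y, cproj_of_ne huy, by simp, h⟩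
    obtain ⟨u', v', hu', hv', hadj⟩ := hstep
    obtain ⟨b, hb, p, hp⟩ := ih v' hv'
    by_cases hau : u' = a
    · subst hau
      refine ⟨b, hb, SimpleGraph.Walk.cons hadj p, ?_⟩
      intro w hw
      rw [SimpleGraph.Walk.support_cons, List.mem_cons] at hw
      rcases hw with rfl | hw
      · simp [hu']
      · exact List.mem_cons_of_mem _ (hp w hw)
    · -- u' and a are the two preimages x, y
      have key : K.Adj a u' := by
        have h1 := cproj_eq_cases (x := x) (y := y) u' u hu'
        have h2 := cproj_eq_cases (x := x) (y := y) a u ha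
        rcases h1 with h1 | ⟨h1y, h1x⟩ <;> rcases h2 with h2 | ⟨h2y, h2x⟩
        · exact absurd (h1.trans h2.symm) hau
        · rw [h1, h2y, h2x]; exact hxy.symm
        · rw [h1y, h2, h1x]; exact hxy
        · exact absurd (h1y.trans h2y.symm) hau
      refine ⟨b, hb, SimpleGraph.Walk.cons key (SimpleGraph.Walk.cons hadj p), ?_⟩
      intro w hw
      rw [SimpleGraph.Walk.support_cons, List.mem_cons] at hw
      rcases hw with rfl | hw
      · simp [ha]
      · rw [SimpleGraph.Walk.support_cons, List.mem_cons] at hw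
        rcases hw with rfl | hw
        · simp [hu']
        · exact List.mem_cons_of_mem _ (hp w hw)

lemma walk_nil_of_no_edges {K : SimpleGraph W} (hE : K.edgeSet = ∅) {a b : W} (p : K.Walk a b) :
    a = b ∧ p.support = [a] := by
  cases p with
  | nil => simp
  | cons h q =>
    exfalso
    have : s(_, _) ∈ K.edgeSet := K.mem_edgeSet.mpr h
    rw [hE] at this
    exact this

lemma menger_base {K : SimpleGraph W} (hE : K.edgeSet = ∅) {A B : Finset W} {s : ℕ}
    (hsep : ∀ X : Finset W, IsSep K A B X → s ≤ X.card) : Linkage K A B s := by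
  have hsAB : s ≤ (A ∩ B).card := by
    apply hsep
    intro a ha b hb p
    obtain ⟨rfl, hsup⟩ := walk_nil_of_no_edges hE p
    exact ⟨a, Finset.mem_inter.mpr ⟨ha, hb⟩, by simp [hsup]⟩
  obtain ⟨T, hTsub, hTcard⟩ := Finset.exists_subset_card_eq hsAB
  have hcardT : Fintype.card ↥(T : Finset W) = s := by simp [hTcard]
  let eT := Fintype.equivFinOfCardEq hcardT
  set f : Fin s → W := fun i => ((eT.symm i : ↥(T : Finset W)) : W) with hf
  have hfT : ∀ i, f i ∈ T := fun i => (eT.symm i).2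
  have hfinj : Function.Injective f := by
    intro i j hij
    exact eT.symm.injective (Subtype.ext hij)
  refine ⟨f, f, fun i => SimpleGraph.Walk.nil, fun i => (Finset.mem_inter.mp (hTsub (hfT i))).1,
    fun i => (Finset.mem_inter.mp (hTsub (hfT i))).2, fun i => SimpleGraph.Walk.IsPath.nil, ?_⟩
  intro i j hij v hvi hvj
  rw [SimpleGraph.Walk.support_nil, List.mem_singleton] at hvi hvj
  exact hij (hfinj (hvi ▸ hvj ▸ rfl))

/-- after removing `{v}` from a path, the endpoint is in the prefix only if we split at the end -/
lemma path_end_in_prefix {K : SimpleGraph W} {a w : W} {q : K.Walk a w} (hq : q.IsPath)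
    {v : W} (hv : v ∈ q.support) (hw : w ∈ (q.takeUntil v hv).support) : v = w := by
  by_contra hne
  have hspec := q.take_spec hv
  have hnodup : q.support.Nodup := hq.support_nodup
  rw [← hspec, SimpleGraph.Walk.support_append] at hnodup
  have hwd : w ∈ (q.dropUntil v hv).support.tail := by
    have hmem : w ∈ (q.dropUntil v hv).support := SimpleGraph.Walk.end_mem_support _
    rw [SimpleGraph.Walk.mem_support_iff] at hmem
    rcases hmem with h | h
    · exact absurd h.symm hne
    · exact h
  exact (List.disjoint_of_nodup_append hnodup) hw hwd

lemma path_start_in_suffix {K : SimpleGraph W} {w b : W} {q : K.Walk w b} (hq : q.IsPath)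
    {v : W} (hv : v ∈ q.support) (hw : w ∈ (q.dropUntil v hv).support) : v = w := by
  by_contra hne
  have hspec := q.take_spec hv
  have hnodup : q.support.Nodup := hq.support_nodup
  rw [← hspec, SimpleGraph.Walk.support_append] at hnodup
  have hwd : w ∈ (q.dropUntil v hv).support.tail := by
    rw [SimpleGraph.Walk.mem_support_iff] at hw
    rcases hw with h | h
    · exact absurd h.symm hne
    · exact h
  exact (List.disjoint_of_nodup_append hnodup)
    (SimpleGraph.Walk.start_mem_support _) hwd

lemma contract_walk_avoids_y (hne : x ≠ y) {a b : W} (ha : a ≠ y)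
    (q : (contractEdge K x y).Walk a b) : y ∉ q.support := by
  induction q with
  | nil => simpa using fun h => ha h.symm
  | @cons u v c h q ih =>
    rw [SimpleGraph.Walk.support_cons, List.mem_cons]
    rintro (h' | h')
    · exact ha h'.symm
    · exact ih h.2.2.1 h'

lemma contractEdge_edgeSet_ncard_lt (hxy : K.Adj x y) :
    (contractEdge K x y).edgeSet.ncard < K.edgeSet.ncard := by
  have hsub : (contractEdge K x y).edgeSet ⊂ (Sym2.map (cproj x y)) '' K.edgeSet := by
    constructor
    · rintro e he
      induction e with
      | h u v =>
        rw [SimpleGraph.mem_edgeSet] at he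
        obtain ⟨hne, huy, hvy, hcase⟩ := he
        rcases hcase with h | ⟨rfl, h⟩ | ⟨rfl, h⟩
        · exact ⟨s(u, v), h, by simp [Sym2.map_pair_eq, cproj_of_ne huy, cproj_of_ne hvy]⟩
        · exact ⟨s(y, v), h, by simp [Sym2.map_pair_eq, cproj_of_ne hvy]⟩
        · exact ⟨s(u, y), h, by simp [Sym2.map_pair_eq, cproj_of_ne huy]⟩
    · intro hsup
      have hmem : s(x, x) ∈ (contractEdge K x y).edgeSet := by
        apply hsup
        exact ⟨s(x, y), K.mem_edgeSet.mpr hxy, by simp [Sym2.map_pair_eq, cproj_of_ne hxy.ne]⟩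
      rw [SimpleGraph.mem_edgeSet] at hmem
      exact hmem.1 rfl
  calc (contractEdge K x y).edgeSet.ncard
      < ((Sym2.map (cproj x y)) '' K.edgeSet).ncard :=
        Set.ncard_lt_ncard hsub (Set.toFinite _)
    _ ≤ K.edgeSet.ncard := Set.ncard_image_le (Set.toFinite _)

lemma deleteEdges_edgeSet_ncard_lt (hxy : K.Adj x y) :
    (K.deleteEdges {s(x, y)}).edgeSet.ncard < K.edgeSet.ncard := by
  apply Set.ncard_lt_ncard _ (Set.toFinite _)
  rw [SimpleGraph.edgeSet_deleteEdges]
  constructor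
  · exact Set.diff_subset
  · intro hsub
    have := hsub (K.mem_edgeSet.mpr hxy)
    simp at this

lemma linkage_of_contract (hxy : K.Adj x y) {A B : Finset W} {s : ℕ}
    (h : Linkage (contractEdge K x y) (A.image (cproj x y)) (B.image (cproj x y)) s) :
    Linkage K A B s := by
  obtain ⟨a₁, b₁, p₁, haA, hbB, hpath, hdisj⟩ := h
  have key : ∀ i, ∃ a b : W, a ∈ A ∧ b ∈ B ∧ ∃ p : K.Walk a b,
      ∀ v ∈ p.support, cproj x y v ∈ (p₁ i).support := by
    intro i
    obtain ⟨a, haA', ha⟩ := Finset.mem_image.mp (haA i)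
    obtain ⟨b, hb, p, hp⟩ := walk_lift hxy (p₁ i) a ha
    by_cases hbB' : b ∈ B
    · exact ⟨a, b, haA', hbB', p, hp⟩
    · obtain ⟨b', hbB'', hb'⟩ := Finset.mem_image.mp (hbB i)
      have hbb' : b ≠ b' := fun hEq => hbB' (hEq ▸ hbB'')
      have hadj : K.Adj b b' := by
        have h1 := cproj_eq_cases (x := x) (y := y) b (b₁ i) hb
        have h2 := cproj_eq_cases (x := x) (y := y) b' (b₁ i) hb'
        rcases h1 with h1 | ⟨h1y, h1x⟩ <;> rcases h2 with h2 | ⟨h2y, h2x⟩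
        · exact absurd (h1.trans h2.symm) hbb'
        · rw [h1, h2y, h2x]; exact hxy
        · rw [h1y, h2, h1x]; exact hxy.symm
        · exact absurd (h1y.trans h2y.symm) hbb'
      refine ⟨a, b', haA', hbB'', p.append (SimpleGraph.Walk.cons hadj SimpleGraph.Walk.nil), ?_⟩
      intro v hv
      rw [SimpleGraph.Walk.mem_support_append_iff] at hv
      rcases hv with hv | hv
      · exact hp v hv
      · rw [SimpleGraph.Walk.support_cons, List.mem_cons] at hv
        rcases hv with rfl | hv
        · rw [hb]; exact SimpleGraph.Walk.end_mem_support _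
        · rw [SimpleGraph.Walk.support_nil, List.mem_singleton] at hv
          subst hv
          rw [hb']; exact SimpleGraph.Walk.end_mem_support _
  choose a b haA' hbB' p hp using key
  refine ⟨a, b, fun i => ((p i).toPath : K.Walk _ _), haA', hbB',
    fun i => ((p i).toPath).2, ?_⟩
  intro i j hij v hvi hvj
  have hvi' := (p i).support_toPath_subset hvi
  have hvj' := (p j).support_toPath_subset hvj
  exact hdisj i j hij (cproj x y v) (hp i v hvi') (hp j v hvj')

lemma menger_step (hxy : K.Adj x y) {A B : Finset W} {s : ℕ}
    (hsep : ∀ X : Finset W, IsSep K A B X → s ≤ X.card)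
    (X₀ : Finset W)
    (hX₀ : IsSep (contractEdge K x y) (A.image (cproj x y)) (B.image (cproj x y)) X₀)
    (hX₀c : X₀.card < s)
    (IH : ∀ K' : SimpleGraph W, K'.edgeSet.ncard < K.edgeSet.ncard → ∀ A' B' : Finset W,
      (∀ X, IsSep K' A' B' X → s ≤ X.card) → Linkage K' A' B' s) :
    Linkage K A B s := by
  have hxney : x ≠ y := hxy.ne
  set Yt : Finset W := X₀.erase y with hYt
  have hYtsep : IsSep (contractEdge K x y) (A.image (cproj x y)) (B.image (cproj x y)) Yt := by
    intro a ha b hb q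
    obtain ⟨a₀, ha₀, ha₀'⟩ := Finset.mem_image.mp ha
    obtain ⟨w, hwX, hws⟩ := hX₀ _ ha _ hb q
    have hwy : w ≠ y := by
      rintro rfl
      exact contract_walk_avoids_y hxney (ha₀' ▸ cproj_ne_y hxney a₀) q hws
    exact ⟨w, Finset.mem_erase.mpr ⟨hwy, hwX⟩, hws⟩
  have hxYt : x ∈ Yt := by
    by_contra hx
    have hsY : IsSep K A B Yt := by
      intro a ha b hb p
      obtain ⟨q, hq⟩ := walk_proj (K := K) hxney p
      obtain ⟨w, hwY, hws⟩ := hYtsep _ (Finset.mem_image_of_mem _ ha) _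
        (Finset.mem_image_of_mem _ hb) q
      obtain ⟨v', hv', hv'w⟩ := hq w hws
      rcases cproj_eq_cases v' w hv'w with h | ⟨hv'y, hwx⟩
      · exact ⟨w, hwY, h ▸ hv'⟩
      · exact absurd (hwx ▸ hwY) hx
    have h1 := hsep _ hsY
    have hle : Yt.card ≤ X₀.card := Finset.card_le_card (Finset.erase_subset _ _)
    omega
  set Y : Finset W := insert y Yt with hY
  have hxY : x ∈ Y := Finset.mem_insert_of_mem hxYt
  have hyY : y ∈ Y := Finset.mem_insert_self _ _
  have hYsep : IsSep K A B Y := by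
    intro a ha b hb p
    obtain ⟨q, hq⟩ := walk_proj (K := K) hxney p
    obtain ⟨w, hwY, hws⟩ := hYtsep _ (Finset.mem_image_of_mem _ ha) _
      (Finset.mem_image_of_mem _ hb) q
    obtain ⟨v', hv', hv'w⟩ := hq w hws
    rcases cproj_eq_cases v' w hv'w with h | ⟨hv'y, hwx⟩
    · exact ⟨v', h ▸ Finset.mem_insert_of_mem hwY, hv'⟩
    · exact ⟨v', by rw [hv'y]; exact hyY, hv'⟩
  have hYcard : Y.card = s := by
    have h1 : s ≤ Y.card := hsep _ hYsep
    have h2 : Y.card ≤ Yt.card + 1 := Finset.card_insert_le _ _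
    have h3 : Yt.card ≤ X₀.card := Finset.card_le_card (Finset.erase_subset _ _)
    omega
  set K₂ : SimpleGraph W := K.deleteEdges {s(x, y)} with hK₂
  have hK₂le : K₂ ≤ K := sdiff_le
  have htrans : ∀ {u₁ u₂ : W} (q : K.Walk u₁ u₂),
      (∀ v ∈ q.support, v ∈ Y → v = u₂) → u₂ ∈ Y → ∀ e ∈ q.edges, e ∈ K₂.edgeSet := by
    intro u₁ u₂ q hfirst hu₂ e he
    induction e with
    | h e₁ e₂ =>
      rw [SimpleGraph.mem_edgeSet, hK₂, SimpleGraph.deleteEdges_adj]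
      refine ⟨K.mem_edgeSet.mp (q.edges_subset_edgeSet he), ?_⟩
      simp only [Set.mem_singleton_iff]
      intro hxyeq
      have he' : s(x, y) ∈ q.edges := hxyeq ▸ he
      have hx' : x ∈ q.support := q.fst_mem_support_of_mem_edges he'
      have hy' : y ∈ q.support := q.snd_mem_support_of_mem_edges he'
      exact hxney ((hfirst x hx' hxY).trans (hfirst y hy' hyY).symm)
  have sepA : ∀ Z, IsSep K₂ A Y Z → s ≤ Z.card := by
    intro Z hZ
    apply hsep
    intro a ha b hb p
    obtain ⟨w0, hw0Y, hw0s⟩ := hYsep a ha b hb p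
    obtain ⟨w, hwY, q, hqsup, hqedg, hqfirst⟩ := exists_firstHit p Y ⟨w0, hw0Y, hw0s⟩
    obtain ⟨z, hzZ, hzs⟩ := hZ a ha w hwY (q.transfer K₂ (htrans q hqfirst hwY))
    rw [SimpleGraph.Walk.support_transfer] at hzs
    exact ⟨z, hzZ, hqsup z hzs⟩
  have sepB : ∀ Z, IsSep K₂ Y B Z → s ≤ Z.card := by
    intro Z hZ
    apply hsep
    intro a ha b hb p
    obtain ⟨w0, hw0Y, hw0s⟩ := hYsep a ha b hb p
    have hw0rev : w0 ∈ p.reverse.support := by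
      rw [SimpleGraph.Walk.support_reverse]; simpa using hw0s
    obtain ⟨w, hwY, q, hqsup, hqedg, hqfirst⟩ := exists_firstHit p.reverse Y ⟨w0, hw0Y, hw0rev⟩
    obtain ⟨z, hzZ, hzs⟩ := hZ w hwY b hb (q.transfer K₂ (htrans q hqfirst hwY)).reverse
    rw [SimpleGraph.Walk.support_reverse, List.mem_reverse,
      SimpleGraph.Walk.support_transfer] at hzs
    have := hqsup z hzs
    rw [SimpleGraph.Walk.support_reverse, List.mem_reverse] at this
    exact ⟨z, hzZ, this⟩
  obtain ⟨aA, wA0, pA, haA, hwA0Y, hpApath, hpAdisj⟩ :=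
    IH K₂ (deleteEdges_edgeSet_ncard_lt hxy) A Y sepA
  obtain ⟨wB0, bB, pB, hwB0Y, hbB, hpBpath, hpBdisj⟩ :=
    IH K₂ (deleteEdges_edgeSet_ncard_lt hxy) Y B sepB
  have truncA : ∀ i, ∃ w, w ∈ Y ∧ ∃ q : K₂.Walk (aA i) w, q.IsPath ∧
      (∀ v ∈ q.support, v ∈ (pA i).support) ∧ (∀ v ∈ q.support, v ∈ Y → v = w) := by
    intro i
    obtain ⟨w, hwY, q, hsub, hedg, hfirst⟩ := exists_firstHit (pA i) Y
      ⟨wA0 i, hwA0Y i, SimpleGraph.Walk.end_mem_support _⟩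
    exact ⟨w, hwY, (q.toPath : K₂.Walk _ _), (q.toPath).2,
      fun v hv => hsub v (q.support_toPath_subset hv),
      fun v hv hvY => hfirst v (q.support_toPath_subset hv) hvY⟩
  choose wA hwAY qA hqApath hqAsub hqAfirst using truncA
  have truncB : ∀ j, ∃ w, w ∈ Y ∧ ∃ q : K₂.Walk w (bB j), q.IsPath ∧
      (∀ v ∈ q.support, v ∈ (pB j).support) ∧ (∀ v ∈ q.support, v ∈ Y → v = w) := by
    intro j
    have hrev : wB0 j ∈ (pB j).reverse.support := by
      rw [SimpleGraph.Walk.support_reverse, List.mem_reverse]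
      exact SimpleGraph.Walk.start_mem_support _
    obtain ⟨w, hwY, q, hsub, hedg, hfirst⟩ := exists_firstHit (pB j).reverse Y
      ⟨wB0 j, hwB0Y j, hrev⟩
    refine ⟨w, hwY, (q.toPath : K₂.Walk _ _).reverse, ((q.toPath).2).reverse, ?_, ?_⟩
    · intro v hv
      rw [SimpleGraph.Walk.support_reverse, List.mem_reverse] at hv
      have h2 := hsub v (q.support_toPath_subset hv)
      rw [SimpleGraph.Walk.support_reverse, List.mem_reverse] at h2
      exact h2
    · intro v hv hvY
      rw [SimpleGraph.Walk.support_reverse, List.mem_reverse] at hv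
      exact hfirst v (q.support_toPath_subset hv) hvY
  choose wB hwBY qB hqBpath hqBsub hqBfirst using truncB
  have hwAmem : ∀ i, wA i ∈ (pA i).support :=
    fun i => hqAsub i _ (SimpleGraph.Walk.end_mem_support _)
  have hwAinj : Function.Injective wA := by
    intro i j hij
    by_contra hne
    exact hpAdisj i j hne (wA i) (hwAmem i) (hij ▸ hwAmem j)
  have hwBmem : ∀ j, wB j ∈ (pB j).support :=
    fun j => hqBsub j _ (SimpleGraph.Walk.start_mem_support _)
  have hwBinj : Function.Injective wB := by
    intro i j hij
    by_contra hne
    exact hpBdisj i j hne (wB i) (hwBmem i) (hij ▸ hwBmem j)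
  have hwBsurj : ∀ u ∈ Y, ∃ j, wB j = u := by
    have himg : (Finset.univ.image wB) ⊆ Y := by
      intro u hu
      obtain ⟨j, _, hj⟩ := Finset.mem_image.mp hu
      exact hj ▸ hwBY j
    have hcardimg : (Finset.univ.image wB).card = s := by
      rw [Finset.card_image_of_injective _ hwBinj, Finset.card_univ, Fintype.card_fin]
    have heq : Finset.univ.image wB = Y :=
      Finset.eq_of_subset_of_card_le himg (by rw [hcardimg, hYcard])
    intro u hu
    rw [← heq] at hu
    obtain ⟨j, _, hj⟩ := Finset.mem_image.mp hu
    exact ⟨j, hj⟩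
  choose σ hσeq using fun i => hwBsurj _ (hwAY i)
  have hσinj : Function.Injective σ := by
    intro i k h
    apply hwAinj
    rw [← hσeq i, ← hσeq k, h]
  have cross : ∀ i j v, v ∈ (qA i).support → v ∈ (qB j).support →
      wA i = wB j ∧ v = wA i := by
    intro i j v hvA hvB
    have hCK : ∀ e ∈ (((qA i).takeUntil v hvA).append ((qB j).dropUntil v hvB)).edges,
        e ∈ K.edgeSet := fun e he =>
      SimpleGraph.edgeSet_mono hK₂le (SimpleGraph.Walk.edges_subset_edgeSet _ he)
    obtain ⟨u, huY, hus⟩ := hYsep (aA i) (haA i) (bB j) (hbB j)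
      ((((qA i).takeUntil v hvA).append ((qB j).dropUntil v hvB)).transfer K hCK)
    rw [SimpleGraph.Walk.support_transfer, SimpleGraph.Walk.mem_support_append_iff] at hus
    have hkey : v = wA i ∨ v = wB j := by
      rcases hus with hus | hus
      · have hu1 : u ∈ (qA i).support := SimpleGraph.Walk.support_takeUntil_subset _ _ hus
        have heq := hqAfirst i u hu1 huY
        rw [heq] at hus
        exact Or.inl (path_end_in_prefix (hqApath i) hvA hus)
      · have hu2 : u ∈ (qB j).support := SimpleGraph.Walk.support_dropUntil_subset _ _ hus
        have heq := hqBfirst j u hu2 huY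
        rw [heq] at hus
        exact Or.inr (path_start_in_suffix (hqBpath j) hvB hus)
    rcases hkey with rfl | rfl
    · exact ⟨(hqBfirst j _ hvB (hwAY i)).symm ▸ rfl, rfl⟩
    · exact ⟨(hqAfirst i _ hvA (hwBY j)).symm, hqAfirst i _ hvA (hwBY j)⟩
  -- assemble
  have hRK : ∀ i, ∀ e ∈ ((qA i).append ((qB (σ i)).copy (hσeq i) rfl)).edges, e ∈ K.edgeSet :=
    fun i e he => SimpleGraph.edgeSet_mono hK₂le (SimpleGraph.Walk.edges_subset_edgeSet _ he)
  have hRsup : ∀ i v, v ∈ ((qA i).append ((qB (σ i)).copy (hσeq i) rfl)).support →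
      v ∈ (qA i).support ∨ v ∈ (qB (σ i)).support := by
    intro i v hv
    rw [SimpleGraph.Walk.mem_support_append_iff] at hv
    rcases hv with hv | hv
    · exact Or.inl hv
    · rw [SimpleGraph.Walk.support_copy] at hv
      exact Or.inr hv
  refine ⟨aA, fun i => bB (σ i),
    fun i => ((((qA i).append ((qB (σ i)).copy (hσeq i) rfl)).transfer K (hRK i)).toPath :
      K.Walk _ _),
    haA, fun i => hbB (σ i), fun i => (SimpleGraph.Walk.toPath _).2, ?_⟩
  intro i k hik v hvi hvk
  have hvi' := SimpleGraph.Walk.support_toPath_subset _ hvi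
  have hvk' := SimpleGraph.Walk.support_toPath_subset _ hvk
  rw [SimpleGraph.Walk.support_transfer] at hvi' hvk'
  rcases hRsup i v hvi' with h1 | h1 <;> rcases hRsup k v hvk' with h2 | h2
  · exact hpAdisj i k hik v (hqAsub i v h1) (hqAsub k v h2)
  · have hc := (cross i (σ k) v h1 h2).1
    exact hik (hwAinj (hc.trans (hσeq k)))
  · have hc := (cross k (σ i) v h2 h1).1
    exact hik (hwAinj (hc.trans (hσeq i))).symm
  · exact hpBdisj (σ i) (σ k) (fun h => hik (hσinj h)) v (hqBsub _ v h1) (hqBsub _ v h2)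

theorem menger_aux : ∀ (m : ℕ) (K : SimpleGraph W), K.edgeSet.ncard ≤ m →
    ∀ (A B : Finset W) (s : ℕ), (∀ X, IsSep K A B X → s ≤ X.card) → Linkage K A B s := by
  intro m
  induction m with
  | zero =>
    intro K hc A B s hsep
    have hE : K.edgeSet = ∅ := (Set.ncard_eq_zero (Set.toFinite _)).mp (Nat.le_zero.mp hc)
    exact menger_base hE hsep
  | succ m ih =>
    intro K hc A B s hsep
    by_cases hE : K.edgeSet = ∅
    · exact menger_base hE hsep
    · have hne : ∃ x y : W, K.Adj x y := by
        obtain ⟨e, he⟩ := Set.nonempty_iff_ne_empty.mpr hE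
        induction e with
        | h u v => exact ⟨u, v, he⟩
      obtain ⟨x, y, hxy⟩ := hne
      by_cases hcase : ∀ X, IsSep (contractEdge K x y) (A.image (cproj x y))
          (B.image (cproj x y)) X → s ≤ X.card
      · refine linkage_of_contract hxy (ih (contractEdge K x y) ?_ _ _ _ hcase)
        have := contractEdge_edgeSet_ncard_lt hxy
        omega
      · push_neg at hcase
        obtain ⟨X₀, hX₀, hX₀c⟩ := hcase
        refine menger_step hxy hsep X₀ hX₀ hX₀c ?_
        intro K' hlt A' B' hs
        exact ih K' (by omega) A' B' s hs

/-- Menger's theorem (vertex version, for sets). -/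
theorem menger (K : SimpleGraph W) (A B : Finset W) (s : ℕ)
    (hsep : ∀ X : Finset W, IsSep K A B X → s ≤ X.card) : Linkage K A B s :=
  menger_aux K.edgeSet.ncard K le_rfl A B s hsep


/-- Number of edges in `E` incident to `v`. -/
def dcount (E : Finset (Sym2 W)) (v : W) : ℕ := (E.filter (fun e => v ∈ e)).card

lemma dcount_symmDiff (E E' : Finset (Sym2 W)) (v : W) :
    dcount (E ∆ E') v + 2 * dcount (E ∩ E') v = dcount E v + dcount E' v := by
  classical
  unfold dcount
  have hfil : (E ∆ E').filter (fun e => v ∈ e) =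
      (E.filter (fun e => v ∈ e)) ∆ (E'.filter (fun e => v ∈ e)) := by
    ext e
    simp only [Finset.mem_filter, Finset.mem_symmDiff]
    tauto
  have hfil2 : (E ∩ E').filter (fun e => v ∈ e) =
      (E.filter (fun e => v ∈ e)) ∩ (E'.filter (fun e => v ∈ e)) := by
    ext e
    simp only [Finset.mem_filter, Finset.mem_inter]
    tauto
  rw [hfil, hfil2]
  set s := E.filter (fun e => v ∈ e)
  set u := E'.filter (fun e => v ∈ e)
  have h1 : (s ∆ u) = (s ∪ u) \ (s ∩ u) := by
    ext e
    simp only [Finset.mem_symmDiff, Finset.mem_sdiff, Finset.mem_union, Finset.mem_inter]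
    tauto
  have h2 : (s ∩ u) ⊆ (s ∪ u) := (Finset.inter_subset_left).trans Finset.subset_union_left
  have h3 := Finset.card_union_add_card_inter s u
  have h4 := Finset.card_le_card h2
  rw [h1, Finset.card_sdiff_of_subset h2]
  omega

lemma dcount_parity_symmDiff (E E' : Finset (Sym2 W)) (v : W) :
    Odd (dcount (E ∆ E') v) ↔ (Odd (dcount E v) ↔ ¬ Odd (dcount E' v)) := by
  have := dcount_symmDiff E E' v
  rcases Nat.even_or_odd (dcount E v) with h1 | h1 <;>
    rcases Nat.even_or_odd (dcount E' v) with h2 | h2 <;>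
      rcases Nat.even_or_odd (dcount (E ∆ E') v) with h3 | h3 <;>
        simp only [Nat.even_iff, Nat.odd_iff] at * <;> constructor <;> intro h <;> omega

lemma dcount_mono {E E' : Finset (Sym2 W)} (h : E ⊆ E') (v : W) :
    dcount E v ≤ dcount E' v :=
  Finset.card_le_card (Finset.filter_subset_filter _ h)

lemma countP_toFinset {α : Type*} [DecidableEq α] {l : List α} (h : l.Nodup)
    (P : α → Prop) [DecidablePred P] :
    (l.toFinset.filter P).card = l.countP (fun e => decide (P e)) := by
  induction l with
  | nil => simp
  | cons e l ih =>
    rw [List.nodup_cons] at h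
    rw [List.toFinset_cons, Finset.filter_insert, List.countP_cons]
    by_cases hP : P e
    · rw [if_pos hP]
      rw [Finset.card_insert_of_notMem (by
        intro hmem
        exact h.1 (List.mem_toFinset.mp (Finset.mem_of_mem_filter _ hmem)))]
      simp [hP, ih h.2]
    · rw [if_neg hP]
      simp [hP, ih h.2]

/-- dcount of the edge finset of a trail equals countP. -/
lemma dcount_edges_toFinset {F : SimpleGraph W} {a b : W} {p : F.Walk a b}
    (hp : p.IsTrail) (v : W) :
    dcount p.edges.toFinset v = p.edges.countP (fun e => decide (v ∈ e)) := by
  classical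
  unfold dcount
  exact countP_toFinset hp.edges_nodup _

lemma odd_dcount_path_iff {F : SimpleGraph W} {a b : W} {p : F.Walk a b}
    (hp : p.IsPath) (hab : a ≠ b) (v : W) :
    Odd (dcount p.edges.toFinset v) ↔ (v = a ∨ v = b) := by
  rw [dcount_edges_toFinset hp.isTrail, ← Nat.not_even_iff_odd,
    hp.isTrail.even_countP_edges_iff v]
  constructor
  · intro h
    by_contra hcon
    push_neg at hcon
    exact h (fun _ => hcon)
  · rintro (rfl | rfl) h
    · exact (h hab).1 rfl
    · exact (h hab).2 rfl

lemma even_dcount_cycle {F : SimpleGraph W} {a : W} {c : F.Walk a a}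
    (hc : c.IsTrail) (v : W) : Even (dcount c.edges.toFinset v) := by
  rw [dcount_edges_toFinset hc]
  rw [hc.even_countP_edges_iff v]
  intro h
  exact absurd rfl h

open Classical in
/-- number of elements of `T` reachable from `v` -/
noncomputable def rcount (F : SimpleGraph W) (T : Finset W) (v : W) : ℕ :=
  (T.filter (fun u => F.Reachable v u)).card

lemma rcount_eq (F : SimpleGraph W) (T : Finset W) (v : W)
    [inst : DecidablePred (fun u => F.Reachable v u)] :
    rcount F T v = (T.filter (fun u => F.Reachable v u)).card := by
  unfold rcount
  congr 1
  ext u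
  simp

/-- Existence of a `T`-join inside a graph whose components each contain evenly
many vertices of `T`. -/
lemma tjoin_exists (F : SimpleGraph W) :
    ∀ (n : ℕ) (T : Finset W), T.card ≤ n →
    (∀ v : W, Even (rcount F T v)) →
    ∃ E' : Finset (Sym2 W), (↑E' ⊆ F.edgeSet) ∧ ∀ v, (Odd (dcount E' v) ↔ v ∈ T) := by
  classical
  intro n
  induction n with
  | zero =>
    intro T hT _
    have : T = ∅ := Finset.card_eq_zero.mp (Nat.le_zero.mp hT)
    subst this
    exact ⟨∅, by simp, fun v => by simp [dcount]⟩
  | succ n ih =>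
    intro T hT hinv
    rcases Finset.eq_empty_or_nonempty T with rfl | ⟨a, haT⟩
    · exact ⟨∅, by simp, fun v => by simp [dcount]⟩
    · have haf : a ∈ T.filter (fun u => F.Reachable a u) :=
        Finset.mem_filter.mpr ⟨haT, SimpleGraph.Reachable.refl a⟩
      have hcard : 2 ≤ (T.filter (fun u => F.Reachable a u)).card := by
        have hpos : 0 < (T.filter (fun u => F.Reachable a u)).card :=
          Finset.card_pos.mpr ⟨a, haf⟩
        have heven := hinv a
        rw [rcount_eq] at heven
        rw [Nat.even_iff] at heven
        omega
      obtain ⟨b, hbf, hba⟩ := Finset.exists_mem_ne hcard a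
      obtain ⟨hbT, hreach⟩ := Finset.mem_filter.mp hbf
      set T' : Finset W := (T.erase a).erase b with hT'
      have hT'mem : ∀ v, v ∈ T' ↔ (v ∈ T ∧ v ≠ a ∧ v ≠ b) := by
        intro v
        simp only [hT', Finset.mem_erase]
        tauto
      have hT'card : T'.card ≤ n := by
        have h1 : (T.erase a).card = T.card - 1 := Finset.card_erase_of_mem haT
        have hbmem : b ∈ T.erase a := Finset.mem_erase.mpr ⟨hba, hbT⟩
        have h2 : T'.card = (T.erase a).card - 1 := Finset.card_erase_of_mem hbmem
        have h3 : 0 < T.card := Finset.card_pos.mpr ⟨a, haT⟩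
        omega
      have hinv' : ∀ v : W, Even (rcount F T' v) := by
        intro v
        rw [rcount_eq]
        have heven := hinv v
        rw [rcount_eq] at heven
        have hsplit : T'.filter (fun u => F.Reachable v u) =
            ((T.filter (fun u => F.Reachable v u)).erase a).erase b := by
          ext u
          simp only [Finset.mem_filter, Finset.mem_erase, hT'mem]
          tauto
        rw [hsplit]
        by_cases hva : F.Reachable v a
        · have hvb : F.Reachable v b := hva.trans hreach
          have ha' : a ∈ T.filter (fun u => F.Reachable v u) :=
            Finset.mem_filter.mpr ⟨haT, hva⟩
          have hb' : b ∈ (T.filter (fun u => F.Reachable v u)).erase a :=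
            Finset.mem_erase.mpr ⟨hba, Finset.mem_filter.mpr ⟨hbT, hvb⟩⟩
          rw [Finset.card_erase_of_mem hb', Finset.card_erase_of_mem ha']
          have hpos : 0 < (T.filter (fun u => F.Reachable v u)).card :=
            Finset.card_pos.mpr ⟨a, ha'⟩
          rw [Nat.even_iff] at heven ⊢
          omega
        · have hvb : ¬ F.Reachable v b := fun h => hva (h.trans hreach.symm)
          have ha' : a ∉ T.filter (fun u => F.Reachable v u) := by
            simp only [Finset.mem_filter]; tauto
          have hb' : b ∉ T.filter (fun u => F.Reachable v u) := by
            simp only [Finset.mem_filter]; tauto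
          rw [Finset.erase_eq_of_notMem (fun h => hb' (Finset.mem_of_mem_erase h)),
            Finset.erase_eq_of_notMem ha']
          exact heven
      obtain ⟨E₁, hE₁sub, hE₁par⟩ := ih T' hT'card hinv'
      obtain ⟨q⟩ := hreach
      set p : F.Walk a b := (q.toPath : F.Walk a b) with hp
      have hppath : p.IsPath := q.toPath.2
      refine ⟨E₁ ∆ p.edges.toFinset, ?_, ?_⟩
      · intro e he
        rw [Finset.coe_symmDiff] at he
        rcases he with ⟨he, -⟩ | ⟨he, -⟩
        · exact hE₁sub he
        · rw [Finset.mem_coe, List.mem_toFinset] at he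
          exact p.edges_subset_edgeSet he
      · intro v
        rw [dcount_parity_symmDiff]
        have hpq := odd_dcount_path_iff hppath hba.symm v
        rw [hE₁par, hpq, hT'mem]
        by_cases hva : v = a
        · subst hva; simp [hba.symm, haT]
        · by_cases hvb : v = b
          · subst hvb; simp [hbT, hba]
          · simp [hva, hvb]

lemma mem_support_of_mem_edges' {F : SimpleGraph W} {u v w : W} {p : F.Walk u v}
    {e : Sym2 W} (he : e ∈ p.edges) (hw : w ∈ e) : w ∈ p.support := by
  induction e with
  | h e₁ e₂ =>
    rw [Sym2.mem_iff] at hw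
    rcases hw with rfl | rfl
    · exact p.fst_mem_support_of_mem_edges he
    · exact p.snd_mem_support_of_mem_edges he

lemma countP_incident_start_le_one {F : SimpleGraph W} {a b : W} {p : F.Walk a b}
    (hp : p.IsPath) : p.edges.countP (fun e => decide (a ∈ e)) ≤ 1 := by
  induction p with
  | nil => simp
  | @cons u c b h q ih =>
    rw [SimpleGraph.Walk.cons_isPath_iff] at hp
    have hzero : q.edges.countP (fun e => decide (u ∈ e)) = 0 := by
      rw [List.countP_eq_zero]
      intro e he
      simp only [decide_eq_true_eq]
      intro hmem
      exact hp.2 (mem_support_of_mem_edges' he hmem)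
    rw [SimpleGraph.Walk.edges_cons, List.countP_cons, hzero]
    simp

lemma countP_incident_le_two {F : SimpleGraph W} {u v : W} {p : F.Walk u v}
    (hp : p.IsPath) (w : W) : p.edges.countP (fun e => decide (w ∈ e)) ≤ 2 := by
  induction p with
  | nil => simp
  | @cons u c b h q ih =>
    rw [SimpleGraph.Walk.cons_isPath_iff] at hp
    rw [SimpleGraph.Walk.edges_cons]
    by_cases hw : w ∈ (s(u, c) : Sym2 W)
    · rw [List.countP_cons]
      rw [Sym2.mem_iff] at hw
      rcases hw with rfl | rfl
      · have hzero : q.edges.countP (fun e => decide (w ∈ e)) = 0 := by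
          rw [List.countP_eq_zero]
          intro e he
          simp only [decide_eq_true_eq]
          intro hmem
          exact hp.2 (mem_support_of_mem_edges' he hmem)
        rw [hzero]
        split_ifs <;> omega
      · have hone := countP_incident_start_le_one hp.1
        split_ifs <;> omega
    · rw [List.countP_cons]
      have hq := ih hp.1
      split_ifs with hif
      · exact absurd (by simpa using hif) hw
      · omega

lemma even_card_of_involution : ∀ (n : ℕ) (Φ : Finset W) (ψ : W → W), Φ.card ≤ n →
    (∀ u ∈ Φ, ψ u ∈ Φ) → (∀ u, ψ (ψ u) = u) → (∀ u, ψ u ≠ u) → Even Φ.card := by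
  intro n
  induction n with
  | zero =>
    intro Φ ψ h _ _ _
    simp [Nat.le_zero.mp h]
  | succ n ih =>
    intro Φ ψ hc hcl hinv hne
    rcases Finset.eq_empty_or_nonempty Φ with rfl | ⟨u, hu⟩
    · simp
    · set Φ' : Finset W := (Φ.erase u).erase (ψ u) with hΦ'
      have hψu : ψ u ∈ Φ.erase u := Finset.mem_erase.mpr ⟨hne u, hcl u hu⟩
      have hcard : Φ'.card = Φ.card - 2 := by
        rw [hΦ', Finset.card_erase_of_mem hψu, Finset.card_erase_of_mem hu]
        omega
      have hcl' : ∀ x ∈ Φ', ψ x ∈ Φ' := by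
        intro x hx
        rw [hΦ', Finset.mem_erase, Finset.mem_erase] at hx ⊢
        refine ⟨?_, ?_, hcl x hx.2.2⟩
        · intro hxeq
          have h2 := congrArg ψ hxeq
          rw [hinv, hinv] at h2
          exact hx.2.1 h2
        · intro hxeq
          have h2 := congrArg ψ hxeq
          rw [hinv] at h2
          exact hx.1 h2
      have hΦpos : 0 < Φ.card := Finset.card_pos.mpr ⟨u, hu⟩
      have hψuΦ : 1 < Φ.card := by
        have := Finset.card_pos.mpr ⟨ψ u, hψu⟩
        have := Finset.card_erase_of_mem hu
        omega
      have heven := ih Φ' ψ (by omega) hcl' hinv hne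
      rw [Nat.even_iff] at heven ⊢
      omega

lemma exists_min_satisfying (P : Finset (Sym2 W) → Prop) (hne : ∃ E, P E) :
    ∃ E, P E ∧ ∀ E', P E' → E.card ≤ E'.card := by
  classical
  obtain ⟨E₀, hE₀⟩ := hne
  set cand : Finset (Finset (Sym2 W)) := Finset.univ.filter (fun E => P E) with hcand
  have hne' : cand.Nonempty := ⟨E₀, by simp [hcand, hE₀]⟩
  obtain ⟨E, hE, hmin⟩ := Finset.exists_min_image cand Finset.card hne'
  refine ⟨E, (Finset.mem_filter.mp hE).2, ?_⟩
  intro E' hE'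
  exact hmin E' (by simp [hcand, hE'])

lemma acyclic_of_min {F : SimpleGraph W} {T : Finset W} (E' : Finset (Sym2 W))
    (hsub : ↑E' ⊆ F.edgeSet)
    (hpar : ∀ v, Odd (dcount E' v) ↔ v ∈ T)
    (hmin : ∀ E'', (↑E'' ⊆ F.edgeSet ∧ ∀ v, (Odd (dcount E'' v) ↔ v ∈ T)) →
      E'.card ≤ E''.card) :
    (SimpleGraph.fromEdgeSet (↑E' : Set (Sym2 W))).IsAcyclic := by
  classical
  intro v c hc
  have hedges : ∀ e ∈ c.edges, e ∈ E' := by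
    intro e he
    have := c.edges_subset_edgeSet he
    rw [SimpleGraph.edgeSet_fromEdgeSet] at this
    exact this.1
  set Ec : Finset (Sym2 W) := c.edges.toFinset with hEc
  have hEcsub : Ec ⊆ E' := by
    intro e he
    exact hedges e (List.mem_toFinset.mp he)
  have hEcne : Ec.Nonempty := by
    have h3 := hc.three_le_length
    have : c.edges ≠ [] := by
      intro h
      have := SimpleGraph.Walk.length_edges c
      rw [h] at this
      simp at this
      omega
    obtain ⟨e, he⟩ := List.exists_mem_of_ne_nil _ this
    exact ⟨e, List.mem_toFinset.mpr he⟩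
  set E'' : Finset (Sym2 W) := E' \ Ec with hE''
  have hEeq : E'' = E' ∆ Ec := by
    rw [hE'']
    ext e
    simp only [Finset.mem_sdiff, Finset.mem_symmDiff]
    constructor
    · intro ⟨h1, h2⟩; exact Or.inl ⟨h1, h2⟩
    · rintro (⟨h1, h2⟩ | ⟨h1, h2⟩)
      · exact ⟨h1, h2⟩
      · exact absurd (hEcsub h1) h2
  have hE''par : ∀ w, Odd (dcount E'' w) ↔ w ∈ T := by
    intro w
    rw [hEeq, dcount_parity_symmDiff]
    have heven : Even (dcount Ec w) := even_dcount_cycle hc.isTrail w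
    rw [← Nat.not_odd_iff_even] at heven
    rw [← hpar w]
    tauto
  have hE''sub : ↑E'' ⊆ F.edgeSet := by
    intro e he
    rw [hE''] at he
    exact hsub (Finset.mem_coe.mpr (Finset.mem_sdiff.mp (Finset.mem_coe.mp he)).1)
  have hlt : E''.card < E'.card := by
    apply Finset.card_lt_card
    rw [hE'']
    constructor
    · exact Finset.sdiff_subset
    · intro hss
      obtain ⟨e, he⟩ := hEcne
      have := hss (hEcsub he)
      rw [Finset.mem_sdiff] at this
      exact this.2 he
  exact absurd (hmin E'' ⟨hE''sub, hE''par⟩) (by omega)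

lemma ncard_neighborSet_fromEdgeSet (E' : Finset (Sym2 W))
    (hnd : ∀ e ∈ E', ¬ e.IsDiag) (v : W) :
    ((SimpleGraph.fromEdgeSet (↑E' : Set (Sym2 W))).neighborSet v).ncard = dcount E' v := by
  classical
  have hset : (SimpleGraph.fromEdgeSet (↑E' : Set (Sym2 W))).neighborSet v =
      ↑(Finset.univ.filter (fun w => s(v, w) ∈ E' ∧ v ≠ w)) := by
    ext w
    simp [SimpleGraph.fromEdgeSet_adj, SimpleGraph.mem_neighborSet]
  rw [hset, Set.ncard_coe_finset]
  unfold dcount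
  apply Finset.card_bij (fun w _ => s(v, w))
  · intro w hw
    rw [Finset.mem_filter] at hw ⊢
    exact ⟨hw.2.1, by simp⟩
  · intro w hw w' hw' heq
    rw [Sym2.congr_right] at heq
    exact heq
  · intro e he
    rw [Finset.mem_filter] at he
    obtain ⟨heE, hev⟩ := he
    refine ⟨Sym2.Mem.other hev, ?_, ?_⟩
    · rw [Finset.mem_filter]
      refine ⟨Finset.mem_univ _, ?_, ?_⟩
      · rw [Sym2.other_spec hev]; exact heE
      · intro hveq
        apply hnd e heE
        rw [← Sym2.other_spec hev, ← hveq]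
        exact Sym2.mk_isDiag_iff.mpr rfl
    · exact Sym2.other_spec hev

end MengerDev

end MengerAux

set_option linter.unusedSectionVars false
set_option maxHeartbeats 1600000
open Finset in
open scoped symmDiff in
/-- Under the hypotheses of the even-deletion lemma, the induced subgraph
`G − D` contains a spanning forest in which every vertex has degree `1` or `3`. -/
theorem spanning_forest_deg_one_or_three_of_delete {V : Type*} [Fintype V] [DecidableEq V]
    (G : SimpleGraph V) (k t : ℕ) (hk : 1 ≤ k)
    (hconn : G.MConnected (3 * k)) (hn : 4 * k ≤ Fintype.card V)
    (M : G.Subgraph) (hM : M.IsPerfectMatching)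
    (D : Finset V) (hind : ∀ u ∈ D, ∀ v ∈ D, ¬ G.Adj u v)
    (hDM : ∀ u v : V, M.Adj u v → u ∈ D → v ∉ D)
    (ht : t ≤ k) (hcard : D.card = 2 * t) :
    ∃ F : SimpleGraph ((Finset.univ \ D : Finset V) : Set V),
      F ≤ G.induce ((Finset.univ \ D : Finset V) : Set V) ∧ F.IsAcyclic ∧
        ∀ v, (F.neighborSet v).ncard = 1 ∨ (F.neighborSet v).ncard = 3 := by
  classical
  -- ===== the matching partner function =====
  have hpart : ∀ v : V, ∃! u, M.Adj v u := fun v => hM.1 (hM.2 v)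
  choose pV hpV using fun v => (hpart v).exists
  have huniq : ∀ v w : V, M.Adj v w → w = pV v := fun v w h => ((hpart v).unique h (hpV v))
  have hinvol : ∀ v, pV (pV v) = v := fun v => (huniq (pV v) v (hpV v).symm).symm
  have hpVne : ∀ v, pV v ≠ v := by
    intro v h
    have h2 := M.adj_sub (hpV v)
    rw [h] at h2
    exact G.loopless.irrefl v h2
  have hpVinj : Function.Injective pV := Function.Involutive.injective hinvol
  set S : Finset V := D.image pV with hS
  have hSmem : ∀ v : V, v ∈ S ↔ pV v ∈ D := by
    intro v
    rw [hS, Finset.mem_image]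
    constructor
    · rintro ⟨d, hd, rfl⟩; rw [hinvol]; exact hd
    · intro h; exact ⟨pV v, h, hinvol v⟩
  have hSD : ∀ v ∈ S, v ∉ D := by
    intro v hv
    rw [hS, Finset.mem_image] at hv
    obtain ⟨d, hd, rfl⟩ := hv
    exact hDM d (pV d) (hpV d) hd
  have hScard : S.card = 2 * t := by
    rw [hS, Finset.card_image_of_injective _ hpVinj, hcard]
  -- ===== the vertex set Ω and graph H =====
  set Ω : Set V := ((Finset.univ \ D : Finset V) : Set V) with hΩ
  have hΩmem : ∀ v : V, v ∈ Ω ↔ v ∉ D := by intro v; simp [hΩ]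
  set H : SimpleGraph Ω := G.induce Ω with hH
  have hHadj : ∀ u v : Ω, H.Adj u v ↔ G.Adj ↑u ↑v := by
    intro u v
    rw [hH]
    simp [SimpleGraph.comap]
  -- ===== the 2t special vertices inside Ω, split into A' and B' =====
  set SW : Finset Ω := Finset.univ.filter (fun w : Ω => (w : V) ∈ S) with hSW
  have hSWcard : SW.card = 2 * t := by
    rw [← hScard]
    apply Finset.card_bij (fun (w : Ω) _ => (w : V))
    · intro w hw
      exact (Finset.mem_filter.mp hw).2
    · intro w _ w' _ h
      exact Subtype.ext h
    · intro s hs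
      refine ⟨⟨s, (hΩmem s).mpr (hSD s hs)⟩, ?_, rfl⟩
      rw [hSW, Finset.mem_filter]
      exact ⟨Finset.mem_univ _, hs⟩
  obtain ⟨A', hA'sub, hA'card⟩ := Finset.exists_subset_card_eq
    (show t ≤ SW.card by omega)
  set B' : Finset Ω := SW \ A' with hB'
  have hB'card : B'.card = t := by
    rw [hB', Finset.card_sdiff_of_subset hA'sub]
    omega
  have hABdisj : ∀ w : Ω, w ∈ B' → w ∉ A' := by
    intro w hw
    exact (Finset.mem_sdiff.mp hw).2
  have hA'S : ∀ w ∈ A', (w : V) ∈ S := fun w hw => (Finset.mem_filter.mp (hA'sub hw)).2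
  have hB'S : ∀ w ∈ B', (w : V) ∈ S := fun w hw =>
    (Finset.mem_filter.mp (Finset.mem_sdiff.mp hw).1).2
  -- ===== separation bound from 3k-connectivity =====
  have hsepbound : ∀ X : Finset Ω, MengerDev.IsSep H A' B' X → t ≤ X.card := by
    intro X hX
    by_contra hlt
    push_neg at hlt
    set S'' : Finset V := D ∪ X.image (fun w : Ω => (w : V)) with hS''
    have hS''card : S''.card < 3 * k := by
      have h1 : S''.card ≤ D.card + X.card := by
        calc S''.card ≤ D.card + (X.image (fun w : Ω => (w : V))).card :=
              Finset.card_union_le _ _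
          _ ≤ D.card + X.card := by
              have := Finset.card_image_le (s := X) (f := fun w : Ω => (w : V))
              omega
      omega
    have hconn' := hconn.2 S'' hS''card
    have hAX : ∃ a ∈ A', a ∉ X := by
      by_contra h
      push_neg at h
      have := Finset.card_le_card h
      omega
    have hBX : ∃ b ∈ B', b ∉ X := by
      by_contra h
      push_neg at h
      have := Finset.card_le_card h
      omega
    obtain ⟨a, haA, haX⟩ := hAX
    obtain ⟨b, hbB, hbX⟩ := hBX
    have hmem : ∀ w : Ω, w ∉ X → (w : V) ∈ ((Finset.univ \ S'' : Finset V) : Set V) := by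
      intro w hw
      simp only [Finset.coe_sdiff, Set.mem_diff, Finset.coe_univ, Set.mem_univ, true_and,
        Finset.mem_coe]
      intro hmem'
      rcases Finset.mem_union.mp hmem' with h | h
      · exact (hΩmem _).mp w.2 h
      · rw [Finset.mem_image] at h
        obtain ⟨x, hxX, hxw⟩ := h
        exact hw (by rwa [Subtype.ext hxw] at hxX)
    -- walk in the smaller induced graph
    obtain ⟨q⟩ := hconn'.preconnected ⟨↑a, hmem a haX⟩ ⟨↑b, hmem b hbX⟩
    -- map it into H
    set φ : (G.induce ((Finset.univ \ S'' : Finset V) : Set V)) →g H :=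
      ⟨fun v => ⟨↑v, by
        rw [hΩmem]
        intro hD
        have hv2 := v.2
        simp only [Finset.coe_sdiff, Set.mem_diff, Finset.mem_coe] at hv2
        exact hv2.2 (Finset.mem_union_left _ hD)⟩, by
        intro u v huv
        rw [hHadj]
        exact huv⟩ with hφ
    have hq' := q.map φ
    obtain ⟨x, hxX, hxs⟩ := hX a haA b hbB ((q.map φ).copy (by rw [hφ]; rfl) (by rw [hφ]; rfl))
    rw [SimpleGraph.Walk.support_copy, SimpleGraph.Walk.support_map, List.mem_map] at hxs
    obtain ⟨v, hv, hvx⟩ := hxs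
    have hvS'' : (v : V) ∈ ((Finset.univ \ S'' : Finset V) : Set V) := v.2
    simp only [Finset.coe_sdiff, Set.mem_diff, Finset.mem_coe] at hvS''
    apply hvS''.2
    apply Finset.mem_union_right
    rw [Finset.mem_image]
    refine ⟨x, hxX, ?_⟩
    have : (φ v : V) = (v : V) := rfl
    rw [← hvx]
    exact this.symm
  -- ===== Menger: t disjoint A'-B' paths =====
  obtain ⟨af, bf, pf, hafA, hbfB, hpfpath, hpfdisj⟩ :=
    MengerDev.menger H A' B' t hsepbound
  have hafinj : Function.Injective af := by
    intro i j hij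
    by_contra hne
    exact hpfdisj i j hne (af i) ((pf i).start_mem_support)
      (by rw [hij]; exact (pf j).start_mem_support)
  have hbfinj : Function.Injective bf := by
    intro i j hij
    by_contra hne
    exact hpfdisj i j hne (bf i) ((pf i).end_mem_support)
      (by rw [hij]; exact (pf j).end_mem_support)
  have hafbf : ∀ i j, af i ≠ bf j := by
    intro i j h
    exact hABdisj (bf j) (hbfB j) (h ▸ hafA i)
  have hafsurj : ∀ w ∈ A', ∃ i, af i = w := by
    have himg : Finset.univ.image af = A' := by
      apply Finset.eq_of_subset_of_card_le
      · intro u hu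
        obtain ⟨i, _, hi⟩ := Finset.mem_image.mp hu
        exact hi ▸ hafA i
      · rw [Finset.card_image_of_injective _ hafinj, Finset.card_univ, Fintype.card_fin,
          hA'card]
    intro w hw
    rw [← himg] at hw
    obtain ⟨i, _, hi⟩ := Finset.mem_image.mp hw
    exact ⟨i, hi⟩
  have hbfsurj : ∀ w ∈ B', ∃ i, bf i = w := by
    have himg : Finset.univ.image bf = B' := by
      apply Finset.eq_of_subset_of_card_le
      · intro u hu
        obtain ⟨i, _, hi⟩ := Finset.mem_image.mp hu
        exact hi ▸ hbfB i
      · rw [Finset.card_image_of_injective _ hbfinj, Finset.card_univ, Fintype.card_fin,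
          hB'card]
    intro w hw
    rw [← himg] at hw
    obtain ⟨i, _, hi⟩ := Finset.mem_image.mp hw
    exact ⟨i, hi⟩
  -- ===== the partner function inside Ω =====
  set pW : Ω → Ω := fun w => if h : pV ↑w ∈ D then w else ⟨pV ↑w, (hΩmem _).mpr h⟩ with hpW
  have hpWval : ∀ w : Ω, (w : V) ∉ S → (pW w : V) = pV ↑w := by
    intro w hw
    rw [hpW]
    have : ¬ pV (w : V) ∈ D := fun h => hw ((hSmem _).mpr h)
    simp [this]
  have hpWS : ∀ w : Ω, (w : V) ∉ S → (pW w : V) ∉ S := by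
    intro w hw h
    rw [hpWval w hw, hSmem, hinvol] at h
    exact (hΩmem _).mp w.2 h
  have hpWne : ∀ w : Ω, (w : V) ∉ S → pW w ≠ w := by
    intro w hw h
    have := hpWval w hw
    rw [h] at this
    exact hpVne ↑w this.symm
  have hpWinvol : ∀ w : Ω, (w : V) ∉ S → pW (pW w) = w := by
    intro w hw
    apply Subtype.ext
    rw [hpWval _ (hpWS w hw), hpWval w hw, hinvol]
  -- ===== the edge sets =====
  set E_M : Finset (Sym2 Ω) :=
    (Finset.univ.filter (fun w : Ω => (w : V) ∉ S)).image (fun w => s(w, pW w)) with hE_M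
  set E_P : Finset (Sym2 Ω) :=
    Finset.univ.biUnion (fun i : Fin t => (pf i).edges.toFinset) with hE_P
  set E_F : Finset (Sym2 Ω) := E_M ∪ E_P with hE_F
  have hEFsub : ↑E_F ⊆ H.edgeSet := by
    intro e he
    rw [Finset.mem_coe, hE_F, Finset.mem_union] at he
    rcases he with he | he
    · rw [hE_M, Finset.mem_image] at he
      obtain ⟨w, hw, rfl⟩ := he
      rw [SimpleGraph.mem_edgeSet, hHadj, hpWval w (Finset.mem_filter.mp hw).2]
      exact M.adj_sub (hpV ↑w)
    · rw [hE_P, Finset.mem_biUnion] at he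
      obtain ⟨i, _, hei⟩ := he
      exact (pf i).edges_subset_edgeSet (List.mem_toFinset.mp hei)
  set F_gr : SimpleGraph Ω := SimpleGraph.fromEdgeSet ↑E_F with hF_gr
  have hFH : F_gr ≤ H := by
    rw [hF_gr, ← SimpleGraph.fromEdgeSet_edgeSet H]
    exact SimpleGraph.fromEdgeSet_mono hEFsub
  -- ===== degree bound: ≤ 3 =====
  have hdeg3 : ∀ v : Ω, MengerDev.dcount E_F v ≤ 3 := by
    intro v
    have hsplit : MengerDev.dcount E_F v ≤
        MengerDev.dcount E_M v + MengerDev.dcount E_P v := by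
      unfold MengerDev.dcount
      rw [hE_F, Finset.filter_union]
      exact Finset.card_union_le _ _
    have hM1 : MengerDev.dcount E_M v ≤ 1 := by
      unfold MengerDev.dcount
      have hsub : E_M.filter (fun e => v ∈ e) ⊆ {s(v, pW v)} := by
        intro e he
        rw [Finset.mem_filter, hE_M, Finset.mem_image] at he
        obtain ⟨⟨w, hw, rfl⟩, hv⟩ := he
        have hwS : (w : V) ∉ S := (Finset.mem_filter.mp hw).2
        rw [Sym2.mem_iff] at hv
        rcases hv with rfl | rfl
        · exact Finset.mem_singleton_self _
        · rw [Finset.mem_singleton]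
          have h1 : pW (pW w) = w := hpWinvol w hwS
          rw [h1]
          exact Sym2.eq_swap
      calc (E_M.filter (fun e => v ∈ e)).card ≤ ({s(v, pW v)} : Finset (Sym2 Ω)).card :=
            Finset.card_le_card hsub
        _ = 1 := Finset.card_singleton _
    have hP2 : MengerDev.dcount E_P v ≤ 2 := by
      by_cases hsup : ∃ i, v ∈ (pf i).support
      · obtain ⟨i₀, hi₀⟩ := hsup
        unfold MengerDev.dcount
        have hsub : E_P.filter (fun e => v ∈ e) ⊆
            (pf i₀).edges.toFinset.filter (fun e => v ∈ e) := by
          intro e he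
          rw [Finset.mem_filter, hE_P, Finset.mem_biUnion] at he
          obtain ⟨⟨i, _, hei⟩, hv⟩ := he
          by_cases hii : i = i₀
          · subst hii
            exact Finset.mem_filter.mpr ⟨hei, hv⟩
          · exfalso
            exact hpfdisj i i₀ hii v
              (MengerDev.mem_support_of_mem_edges' (List.mem_toFinset.mp hei) hv) hi₀
        calc (E_P.filter (fun e => v ∈ e)).card
            ≤ ((pf i₀).edges.toFinset.filter (fun e => v ∈ e)).card :=
              Finset.card_le_card hsub
          _ = (pf i₀).edges.countP (fun e => decide (v ∈ e)) :=
              MengerDev.countP_toFinset (hpfpath i₀).isTrail.edges_nodup _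
          _ ≤ 2 := MengerDev.countP_incident_le_two (hpfpath i₀) v
      · push_neg at hsup
        unfold MengerDev.dcount
        have : E_P.filter (fun e => v ∈ e) = ∅ := by
          rw [Finset.filter_eq_empty_iff]
          intro e he
          rw [hE_P, Finset.mem_biUnion] at he
          obtain ⟨i, _, hei⟩ := he
          intro hv
          exact hsup i (MengerDev.mem_support_of_mem_edges' (List.mem_toFinset.mp hei) hv)
        rw [this]
        simp
    omega
  -- ===== the involution on Ω =====
  set ψ : Ω → Ω := fun w =>
    if h : ∃ i, af i = w then bf h.choose
    else if h' : ∃ i, bf i = w then af h'.choose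
    else pW w with hψ
  have hψaf : ∀ i, ψ (af i) = bf i := by
    intro i
    simp only [hψ]
    have h : ∃ j, af j = af i := ⟨i, rfl⟩
    rw [dif_pos h]
    rw [hafinj h.choose_spec]
  have hψbf : ∀ i, ψ (bf i) = af i := by
    intro i
    simp only [hψ]
    have h : ¬ ∃ j, af j = bf i := by
      rintro ⟨j, hj⟩
      exact hafbf j i hj
    rw [dif_neg h]
    have h' : ∃ j, bf j = bf i := ⟨i, rfl⟩
    rw [dif_pos h']
    rw [hbfinj h'.choose_spec]
  have hψnotS : ∀ w : Ω, (w : V) ∉ S → ψ w = pW w := by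
    intro w hw
    simp only [hψ]
    have h : ¬ ∃ i, af i = w := by
      rintro ⟨i, rfl⟩
      exact hw (hA'S _ (hafA i))
    have h' : ¬ ∃ i, bf i = w := by
      rintro ⟨i, rfl⟩
      exact hw (hB'S _ (hbfB i))
    rw [dif_neg h, dif_neg h']
  have hcases : ∀ w : Ω, (∃ i, af i = w) ∨ (∃ i, bf i = w) ∨ (w : V) ∉ S := by
    intro w
    by_cases hw : (w : V) ∈ S
    · have hwSW : w ∈ SW := Finset.mem_filter.mpr ⟨Finset.mem_univ _, hw⟩
      by_cases hwA : w ∈ A'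
      · exact Or.inl (hafsurj w hwA)
      · exact Or.inr (Or.inl (hbfsurj w (Finset.mem_sdiff.mpr ⟨hwSW, hwA⟩)))
    · exact Or.inr (Or.inr hw)
  have hψinvol : ∀ w : Ω, ψ (ψ w) = w := by
    intro w
    rcases hcases w with ⟨i, rfl⟩ | ⟨i, rfl⟩ | hw
    · rw [hψaf, hψbf]
    · rw [hψbf, hψaf]
    · rw [hψnotS w hw, hψnotS _ (hpWS w hw), hpWinvol w hw]
  have hψne : ∀ w : Ω, ψ w ≠ w := by
    intro w
    rcases hcases w with ⟨i, rfl⟩ | ⟨i, rfl⟩ | hw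
    · rw [hψaf]; exact fun h => hafbf i i h.symm
    · rw [hψbf]; exact hafbf i i
    · rw [hψnotS w hw]; exact hpWne w hw
  have hψreach : ∀ w : Ω, F_gr.Reachable w (ψ w) := by
    have htransfer : ∀ i, ∀ e ∈ (pf i).edges, e ∈ F_gr.edgeSet := by
      intro i e he
      rw [hF_gr, SimpleGraph.edgeSet_fromEdgeSet, Set.mem_diff]
      constructor
      · rw [Finset.mem_coe, hE_F, Finset.mem_union]
        right
        rw [hE_P, Finset.mem_biUnion]
        exact ⟨i, Finset.mem_univ _, List.mem_toFinset.mpr he⟩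
      · intro hdiag
        exact (SimpleGraph.not_isDiag_of_mem_edgeSet H ((pf i).edges_subset_edgeSet he)) hdiag
    intro w
    rcases hcases w with ⟨i, rfl⟩ | ⟨i, rfl⟩ | hw
    · rw [hψaf]
      exact ⟨(pf i).transfer F_gr (htransfer i)⟩
    · rw [hψbf]
      exact ⟨((pf i).transfer F_gr (htransfer i)).reverse⟩
    · rw [hψnotS w hw]
      apply SimpleGraph.Adj.reachable
      rw [hF_gr, SimpleGraph.fromEdgeSet_adj]
      refine ⟨?_, fun h => hpWne w hw h.symm⟩
      rw [Finset.mem_coe, hE_F, Finset.mem_union]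
      left
      rw [hE_M, Finset.mem_image]
      exact ⟨w, Finset.mem_filter.mpr ⟨Finset.mem_univ _, hw⟩, rfl⟩
  -- ===== every component of F_gr is even =====
  have heveninv : ∀ v : Ω, Even (MengerDev.rcount F_gr Finset.univ v) := by
    intro v
    rw [MengerDev.rcount_eq]
    apply MengerDev.even_card_of_involution (Fintype.card Ω) _ ψ
    · exact Finset.card_le_card (Finset.filter_subset _ _) |>.trans (by simp)
    · intro u hu
      rw [Finset.mem_filter] at hu ⊢
      exact ⟨Finset.mem_univ _, hu.2.trans (hψreach u)⟩
    · exact hψinvol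
    · exact hψne
  -- ===== extract a minimal all-odd subgraph =====
  obtain ⟨E₀, hE₀sub, hE₀par⟩ := MengerDev.tjoin_exists F_gr (Finset.univ.card)
    Finset.univ le_rfl heveninv
  obtain ⟨E', ⟨hE'sub, hE'par⟩, hE'min⟩ := MengerDev.exists_min_satisfying
    (fun E => (↑E ⊆ F_gr.edgeSet) ∧ ∀ v, (Odd (MengerDev.dcount E v) ↔ v ∈ Finset.univ))
    ⟨E₀, hE₀sub, hE₀par⟩
  have hacyc := MengerDev.acyclic_of_min (F := F_gr) (T := Finset.univ) E' hE'sub hE'par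
    (fun E'' h => hE'min E'' h)
  have hE'nodiag : ∀ e ∈ E', ¬ e.IsDiag := by
    intro e he
    have := hE'sub (Finset.mem_coe.mpr he)
    rw [hF_gr] at this
    rw [SimpleGraph.edgeSet_fromEdgeSet, Set.mem_diff] at this
    exact this.2
  have hE'Fsub : E' ⊆ E_F := by
    intro e he
    have := hE'sub (Finset.mem_coe.mpr he)
    rw [hF_gr, SimpleGraph.edgeSet_fromEdgeSet, Set.mem_diff] at this
    exact Finset.mem_coe.mp this.1
  refine ⟨SimpleGraph.fromEdgeSet ↑E', ?_, hacyc, ?_⟩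
  · calc SimpleGraph.fromEdgeSet (↑E' : Set (Sym2 Ω)) ≤ F_gr := by
          rw [hF_gr]
          exact SimpleGraph.fromEdgeSet_mono (Finset.coe_subset.mpr hE'Fsub)
      _ ≤ H := hFH
  · intro v
    rw [MengerDev.ncard_neighborSet_fromEdgeSet E' hE'nodiag v]
    have hodd := (hE'par v).mpr (Finset.mem_univ v)
    have hle : MengerDev.dcount E' v ≤ 3 :=
      (MengerDev.dcount_mono hE'Fsub v).trans (hdeg3 v)
    rw [Nat.odd_iff] at hodd
    omega
end

section
/- Every finite simple graph G on n vertices that has a perfect matching satisfies 2·𝓈(G) ≥ 3n (i.e., 𝓈(G) ≥ 3n/2). -/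
/-! Definitions for the slow coloring game (sum-color cost), paintability,
connectivity and auxiliary graphs. -/

variable {V : Type*}

lemma slowAux_ge_card {V : Type*} [DecidableEq V] (G : SimpleGraph V) (fuel : ℕ)
    (hf : 1 ≤ fuel) (A : Finset V) : A.card ≤ G.slowAux fuel A := by
  rcases fuel with _ | k
  · omega
  rcases A.eq_empty_or_nonempty with rfl | hA
  · simp
  · have hmem : A ∈ A.powerset.filter fun M => M.Nonempty := by
      simp [hA]
    calc A.card ≤ A.card + sInf {m | ∃ D : Finset V,
          G.MaxIndepSubset A D ∧ m = G.slowAux k (A \ D)} := Nat.le_add_right _ _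
      _ ≤ _ := Finset.le_sup (f := fun M => M.card + sInf {m | ∃ D : Finset V,
          G.MaxIndepSubset M D ∧ m = G.slowAux k (A \ D)}) hmem
      _ = G.slowAux (k + 1) A := by simp [SimpleGraph.slowAux]

lemma exists_maxIndepSubset {V : Type*} [DecidableEq V] (G : SimpleGraph V) (M : Finset V) :
    ∃ D, G.MaxIndepSubset M D := by
  classical
  induction M using Finset.strongInduction with
  | _ M ih =>
    rcases M.eq_empty_or_nonempty with rfl | ⟨v, hv⟩
    · exact ⟨∅, by simp [SimpleGraph.MaxIndepSubset]⟩
    · set M' := M.filter (fun u => u ≠ v ∧ ¬ G.Adj v u) with hM'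
      have hss : M' ⊂ M := by
        refine ⟨Finset.filter_subset _ _, fun h => ?_⟩
        have := h hv
        simp [hM'] at this
      obtain ⟨D', hsub, hindep, hmax⟩ := ih M' hss
      refine ⟨insert v D', ?_, ?_, ?_⟩
      · intro u hu
        rcases Finset.mem_insert.mp hu with rfl | hu
        · exact hv
        · exact (Finset.filter_subset _ _) (hsub hu)
      · intro a ha b hb hadj
        rcases Finset.mem_insert.mp ha with rfl | ha' <;>
          rcases Finset.mem_insert.mp hb with rfl | hb'
        · exact G.loopless.irrefl _ hadj
        · exact ((Finset.mem_filter.mp (hsub hb')).2).2 hadj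
        · exact ((Finset.mem_filter.mp (hsub ha')).2).2 hadj.symm
        · exact hindep _ ha' _ hb' hadj
      · intro u hu hnu
        by_cases huv : u = v
        · exact absurd (huv ▸ Finset.mem_insert_self v D') hnu
        by_cases hadj : G.Adj v u
        · exact ⟨v, Finset.mem_insert_self v D', hadj⟩
        · have huM' : u ∈ M' := Finset.mem_filter.mpr ⟨hu, huv, hadj⟩
          have hunD' : u ∉ D' := fun h => hnu (Finset.mem_insert_of_mem h)
          obtain ⟨w, hw, hadjw⟩ := hmax u huM' hunD'
          exact ⟨w, Finset.mem_insert_of_mem hw, hadjw⟩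

/-- Every graph `G` on `n` vertices with a perfect matching satisfies
`2·𝓈(G) ≥ 3n`. -/
theorem slow_coloring_of_perfectMatching {V : Type*} [Fintype V] [DecidableEq V]
    (G : SimpleGraph V) (hpm : ∃ M : G.Subgraph, M.IsPerfectMatching) :
    3 * Fintype.card V ≤ 2 * G.sumColorCost := by
  classical
  obtain ⟨PM, hmatch, hspan⟩ := hpm
  -- the matching partner function
  have hpart : ∀ v : V, ∃! w, PM.Adj v w := fun v => hmatch (hspan v)
  choose f hf hfu using hpart
  have hfadj : ∀ v, G.Adj v (f v) := fun v => PM.adj_sub (hf v)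
  have hfne : ∀ v, f v ≠ v := fun v h => (hfadj v).ne h.symm
  have hfinj : Function.Injective f := by
    intro a b hab
    have h1 : PM.Adj (f a) a := (hf a).symm
    have h2 : PM.Adj (f a) b := hab ▸ (hf b).symm
    exact (hfu (f a) a h1).trans (hfu (f a) b h2).symm
  -- independent sets have size at most half
  have hhalf : ∀ D : Finset V, (∀ u ∈ D, ∀ v ∈ D, ¬ G.Adj u v) →
      2 * D.card ≤ Fintype.card V := by
    intro D hD
    have hmap : ∀ v ∈ D, f v ∈ Finset.univ \ D := by
      intro v hv
      simp only [Finset.mem_sdiff, Finset.mem_univ, true_and]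
      intro hfv
      exact hD v hv (f v) hfv (hfadj v)
    have hcard : D.card ≤ (Finset.univ \ D).card :=
      Finset.card_le_card_of_injOn f hmap (hfinj.injOn)
    have : (Finset.univ \ D).card = Fintype.card V - D.card := by
      rw [Finset.card_sdiff_of_subset (Finset.subset_univ D), Finset.card_univ]
    omega
  set n := Fintype.card V with hn
  rcases Nat.eq_zero_or_pos n with hn0 | hn1
  · simp [SimpleGraph.sumColorCost, ← hn, hn0, SimpleGraph.slowAux]
  -- n ≥ 2
  have hn2 : 2 ≤ n := by
    by_contra h
    have hn1' : n = 1 := by omega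
    obtain ⟨v⟩ := Fintype.card_pos_iff.mp (hn ▸ hn1)
    have : f v = v := Fintype.card_le_one_iff.mp (by omega : Fintype.card V ≤ 1) _ _
    exact hfne v this
  obtain ⟨k, hk⟩ : ∃ k, n = k + 1 := ⟨n - 1, by omega⟩
  have hk1 : 1 ≤ k := by omega
  set S : Set ℕ := {m | ∃ D : Finset V,
      G.MaxIndepSubset Finset.univ D ∧ m = G.slowAux k (Finset.univ \ D)} with hS
  have hSne : S.Nonempty := by
    obtain ⟨D, hD⟩ := exists_maxIndepSubset G (Finset.univ : Finset V)
    exact ⟨_, D, hD, rfl⟩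
  have hSbound : ∀ m ∈ S, n ≤ 2 * m := by
    rintro m ⟨D, ⟨_, hindep, _⟩, rfl⟩
    have h1 : (Finset.univ \ D).card ≤ G.slowAux k (Finset.univ \ D) :=
      slowAux_ge_card G k hk1 _
    have h2 : 2 * D.card ≤ n := hhalf D hindep
    have h3 : (Finset.univ \ D).card = n - D.card := by
      rw [Finset.card_sdiff_of_subset (Finset.subset_univ D), Finset.card_univ]
    omega
  have hinf : n ≤ 2 * sInf S := hSbound _ (Nat.sInf_mem hSne)
  have hmain : n + sInf S ≤ G.sumColorCost := by
    have hmem : (Finset.univ : Finset V) ∈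
        (Finset.univ : Finset V).powerset.filter fun M => M.Nonempty := by
      have : Nonempty V := Fintype.card_pos_iff.mp (hn ▸ hn1)
      simp [Finset.univ_nonempty]
    have : G.sumColorCost = G.slowAux (k + 1) Finset.univ := by
      rw [SimpleGraph.sumColorCost, ← hn, hk]
    rw [this]
    have := Finset.le_sup (f := fun M => M.card + sInf {m | ∃ D : Finset V,
        G.MaxIndepSubset M D ∧ m = G.slowAux k (Finset.univ \ D)}) hmem
    simpa [SimpleGraph.slowAux, Finset.card_univ, ← hn, ← hS] using this
  omega
end

section
/- Every finite simple graph G on n ≥ 1 vertices satisfies 2·α(G)·𝓈(G) ≥ n² + n·α(G) (equivalently, 𝓈(G)/n ≥ n/(2α(G)) + 1/2), where α(G) is the independence number of G. -/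
/-! Definitions for the slow coloring game (sum-color cost), paintability,
connectivity and auxiliary graphs. -/

variable {V : Type*}

lemma exists_maxIndep [DecidableEq V] (G : SimpleGraph V) (M : Finset V) :
    ∃ D, G.MaxIndepSubset M D := by
  classical
  have hne : (M.powerset.filter fun D => ∀ u ∈ D, ∀ v ∈ D, ¬ G.Adj u v).Nonempty := by
    refine ⟨∅, ?_⟩; simp
  obtain ⟨D, hD, hmax⟩ : ∃ D ∈ (M.powerset.filter fun D => ∀ u ∈ D, ∀ v ∈ D, ¬ G.Adj u v),
      ∀ x ∈ (M.powerset.filter fun D => ∀ u ∈ D, ∀ v ∈ D, ¬ G.Adj u v), ¬ D < x := by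
    obtain ⟨D, hD, h⟩ := Finset.exists_maximal hne
    exact ⟨D, hD, fun x hx hlt => hlt.not_ge (h hx hlt.le)⟩
  simp only [Finset.mem_filter, Finset.mem_powerset] at hD
  refine ⟨D, hD.1, hD.2, fun v hv hvD => ?_⟩
  by_contra h
  push_neg at h
  apply hmax (insert v D)
  · simp only [Finset.mem_filter, Finset.mem_powerset]
    refine ⟨Finset.insert_subset hv hD.1, fun u hu w hw => ?_⟩
    rcases Finset.mem_insert.mp hu with hu' | hu' <;>
      rcases Finset.mem_insert.mp hw with hw' | hw'
    · subst hu'; subst hw'; exact G.irrefl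
    · subst hu'; exact fun hadj => h w hw' hadj.symm
    · subst hw'; exact h u hu'
    · exact hD.2 u hu' w hw'
  · exact Finset.ssubset_insert hvD

lemma indep_card_le [Fintype V] (G : SimpleGraph V) (D : Finset V)
    (hD : ∀ u ∈ D, ∀ v ∈ D, ¬ G.Adj u v) : D.card ≤ G.indepNumber := by
  have hbdd : BddAbove {n | ∃ s : Set V, (∀ u ∈ s, ∀ v ∈ s, ¬ G.Adj u v) ∧ s.ncard = n} := by
    refine ⟨Fintype.card V, fun n hn => ?_⟩
    obtain ⟨s, _, rfl⟩ := hn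
    simpa [Set.ncard_univ] using Set.ncard_le_ncard (Set.subset_univ s) (Set.finite_univ)
  exact le_csSup hbdd ⟨(D : Set V), by simpa using hD, by simp⟩

lemma key_ineq [Fintype V] [DecidableEq V] (G : SimpleGraph V) :
    ∀ fuel (A : Finset V), A.card ≤ fuel →
      A.card ^ 2 + A.card * G.indepNumber ≤ 2 * G.indepNumber * G.slowAux fuel A := by
  intro fuel
  induction fuel with
  | zero =>
    intro A hA
    simp [Nat.le_zero.mp hA, Finset.card_eq_zero.mp (Nat.le_zero.mp hA)]
  | succ fuel ih =>
    intro A hA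
    rcases A.eq_empty_or_nonempty with rfl | hAne
    · simp
    set α := G.indepNumber with hα
    set S := {m | ∃ D : Finset V, G.MaxIndepSubset A D ∧ m = G.slowAux fuel (A \ D)} with hS
    have hSne : S.Nonempty := by
      obtain ⟨D, hD⟩ := exists_maxIndep G A
      exact ⟨_, D, hD, rfl⟩
    obtain ⟨D, hD, hDeq⟩ := Nat.sInf_mem hSne
    -- bound on slowAux
    have hsup : A.card + sInf S ≤ G.slowAux (fuel + 1) A := by
      have : A ∈ A.powerset.filter fun M => M.Nonempty := by
        simp [hAne]
      exact Finset.le_sup (f := fun M =>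
        M.card + sInf {m | ∃ D : Finset V, G.MaxIndepSubset M D ∧ m = G.slowAux fuel (A \ D)}) this
    -- D nonempty
    have hDne : D.Nonempty := by
      obtain ⟨v, hv⟩ := hAne
      by_cases hvD : v ∈ D
      · exact ⟨v, hvD⟩
      · obtain ⟨u, hu, _⟩ := hD.2.2 v hv hvD
        exact ⟨u, hu⟩
    have hDsub : D ⊆ A := hD.1
    have hdcard : (A \ D).card = A.card - D.card := Finset.card_sdiff_of_subset hDsub
    have hDle : D.card ≤ A.card := Finset.card_le_card hDsub
    have hfuel : (A \ D).card ≤ fuel := by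
      have := hDne.card_pos
      omega
    have hIH := ih _ hfuel
    rw [hdcard, ← hDeq] at hIH
    have hdα : D.card ≤ α := indep_card_le G D hD.2.1
    have hmul : 2 * α * (A.card + sInf S) ≤ 2 * α * G.slowAux (fuel + 1) A :=
      Nat.mul_le_mul_left _ hsup
    obtain ⟨b, hb⟩ : ∃ b, A.card = b + D.card := ⟨A.card - D.card, by omega⟩
    rw [hb] at hIH hmul ⊢
    simp only [Nat.add_sub_cancel] at hIH
    nlinarith [hIH, hmul, hdα]

/-- Every graph `G` on `n ≥ 1` vertices satisfies
`2·α(G)·𝓈(G) ≥ n² + n·α(G)`, i.e. `𝓈(G)/n ≥ n/(2α(G)) + 1/2`. -/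
theorem slow_coloring_lower_bound {V : Type*} [Fintype V] [DecidableEq V]
    (G : SimpleGraph V) (hn : 1 ≤ Fintype.card V) :
    Fintype.card V ^ 2 + Fintype.card V * G.indepNumber ≤
      2 * G.indepNumber * G.sumColorCost := by
  have h := key_ineq G (Fintype.card V) Finset.univ (by simp)
  simpa [SimpleGraph.sumColorCost, Finset.card_univ] using h
end

section
/- If H is a spanning subgraph of a finite simple graph G (i.e., V(H) = V(G) and every edge of H is an edge of G), then 𝓈(H) ≤ 𝓈(G). In particular, if G contains a spanning forest in which every vertex has degree 1 or 3, then 2·𝓈(G) ≥ 3·|V(G)|. -/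
/-! Definitions for the slow coloring game (sum-color cost), paintability,
connectivity and auxiliary graphs. -/

variable {V : Type*}

set_option linter.unusedSectionVars false

open SimpleGraph Finset

section Game
variable [DecidableEq V] (G : SimpleGraph V)

lemma maxIndep_extend (M : Finset V) :
    ∀ (k : ℕ) (D : Finset V), (M \ D).card ≤ k → D ⊆ M →
      (∀ u ∈ D, ∀ v ∈ D, ¬ G.Adj u v) → ∃ D', D ⊆ D' ∧ G.MaxIndepSubset M D' := by
  intro k
  induction k with
  | zero =>
    intro D hcard hDM hind
    refine ⟨D, subset_rfl, hDM, hind, fun v hv hvD => absurd ?_ hvD⟩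
    have : M \ D = ∅ := Finset.card_eq_zero.mp (Nat.le_zero.mp hcard)
    by_contra hvD'
    exact absurd (Finset.mem_sdiff.mpr ⟨hv, hvD'⟩) (by simp [this])
  | succ k ih =>
    intro D hcard hDM hind
    by_cases hdom : ∀ v ∈ M, v ∉ D → ∃ u ∈ D, G.Adj u v
    · exact ⟨D, subset_rfl, hDM, hind, hdom⟩
    · push_neg at hdom
      obtain ⟨v, hvM, hvD, hnadj⟩ := hdom
      have hind' : ∀ u ∈ insert v D, ∀ w ∈ insert v D, ¬ G.Adj u w := by
        intro u hu w hw h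
        rcases Finset.mem_insert.mp hu with hu1 | hu2
        · rcases Finset.mem_insert.mp hw with hw1 | hw2
          · exact G.irrefl (hu1 ▸ hw1 ▸ h)
          · exact hnadj w hw2 (hu1 ▸ h).symm
        · rcases Finset.mem_insert.mp hw with hw1 | hw2
          · exact hnadj u hu2 (hw1 ▸ h)
          · exact hind u hu2 w hw2 h
      have hcard' : (M \ insert v D).card ≤ k := by
        have h1 : M \ insert v D = (M \ D).erase v := by
          ext x; simp [Finset.mem_sdiff, Finset.mem_erase]; tauto
        have h2 : v ∈ M \ D := Finset.mem_sdiff.mpr ⟨hvM, hvD⟩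
        rw [h1]
        have := Finset.card_erase_of_mem h2
        omega
      obtain ⟨D', hDD', hD'⟩ := ih (insert v D) hcard' (Finset.insert_subset hvM hDM) hind'
      exact ⟨D', (Finset.subset_insert v D).trans hDD', hD'⟩

lemma maxIndep_exists (M : Finset V) :
    ∃ D, G.MaxIndepSubset M D := by
  obtain ⟨D', _, hD'⟩ := maxIndep_extend G M (M \ ∅).card ∅ le_rfl (Finset.empty_subset M)
    (by simp)
  exact ⟨D', hD'⟩

lemma maxIndep_nonempty {M D : Finset V} (hM : M.Nonempty) (hD : G.MaxIndepSubset M D) :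
    D.Nonempty := by
  rcases D.eq_empty_or_nonempty with rfl | h
  · obtain ⟨v, hv⟩ := hM
    obtain ⟨u, hu, -⟩ := hD.2.2 v hv (by simp)
    simp at hu
  · exact h

lemma slowAux_mono_A : ∀ (fuel : ℕ) (A B : Finset V), B ⊆ A →
    G.slowAux fuel B ≤ G.slowAux fuel A := by
  intro fuel
  induction fuel with
  | zero => intro A B _; simp [SimpleGraph.slowAux]
  | succ fuel ih =>
    intro A B hBA
    rw [SimpleGraph.slowAux]
    apply Finset.sup_le
    intro M hM
    rw [Finset.mem_filter, Finset.mem_powerset] at hM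
    calc M.card + sInf {m | ∃ D : Finset V, G.MaxIndepSubset M D ∧ m = G.slowAux fuel (B \ D)}
        ≤ M.card + sInf {m | ∃ D : Finset V, G.MaxIndepSubset M D ∧ m = G.slowAux fuel (A \ D)} := by
          apply Nat.add_le_add_left
          obtain ⟨D, hD⟩ := maxIndep_exists G M
          have hne : {m | ∃ D : Finset V, G.MaxIndepSubset M D ∧ m = G.slowAux fuel (A \ D)}.Nonempty :=
            ⟨_, D, hD, rfl⟩
          obtain ⟨D', hD', heq⟩ := Nat.sInf_mem hne
          calc sInf {m | ∃ D : Finset V, G.MaxIndepSubset M D ∧ m = G.slowAux fuel (B \ D)}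
              ≤ G.slowAux fuel (B \ D') := Nat.sInf_le ⟨D', hD', rfl⟩
            _ ≤ G.slowAux fuel (A \ D') := ih _ _ (Finset.sdiff_subset_sdiff hBA subset_rfl)
            _ = _ := heq.symm
      _ ≤ _ := by
          rw [SimpleGraph.slowAux]
          have hmem : M ∈ A.powerset.filter fun M => M.Nonempty := by
            rw [Finset.mem_filter, Finset.mem_powerset]
            exact ⟨hM.1.trans hBA, hM.2⟩
          exact Finset.le_sup (f := fun M => M.card +
            sInf {m | ∃ D : Finset V, G.MaxIndepSubset M D ∧ m = G.slowAux fuel (A \ D)}) hmem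

lemma slowAux_mono_G (H : SimpleGraph V) (hHG : H ≤ G) :
    ∀ (fuel : ℕ) (A : Finset V), H.slowAux fuel A ≤ G.slowAux fuel A := by
  intro fuel
  induction fuel with
  | zero => intro A; simp [SimpleGraph.slowAux]
  | succ fuel ih =>
    intro A
    rw [SimpleGraph.slowAux, SimpleGraph.slowAux]
    apply Finset.sup_le
    intro M hM
    refine le_trans ?_ (Finset.le_sup hM)
    apply Nat.add_le_add_left
    obtain ⟨D0, hD0⟩ := maxIndep_exists G M
    have hne : {m | ∃ D : Finset V, G.MaxIndepSubset M D ∧ m = G.slowAux fuel (A \ D)}.Nonempty :=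
      ⟨_, D0, hD0, rfl⟩
    obtain ⟨D, hD, heq⟩ := Nat.sInf_mem hne
    -- extend D to an H-maximal independent subset
    have hindH : ∀ u ∈ D, ∀ v ∈ D, ¬ H.Adj u v := fun u hu v hv h => hD.2.1 u hu v hv (hHG h)
    obtain ⟨D', hDD', hD'⟩ := maxIndep_extend H M (M \ D).card D le_rfl hD.1 hindH
    calc sInf {m | ∃ Dx : Finset V, H.MaxIndepSubset M Dx ∧ m = H.slowAux fuel (A \ Dx)}
        ≤ H.slowAux fuel (A \ D') := Nat.sInf_le ⟨D', hD', rfl⟩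
      _ ≤ H.slowAux fuel (A \ D) := slowAux_mono_A H fuel _ _ (Finset.sdiff_subset_sdiff subset_rfl hDD')
      _ ≤ G.slowAux fuel (A \ D) := ih _
      _ = _ := heq.symm

/-- Lower-bound device: if Lister has a move `M` such that every Painter response `D`
leaves value at least `k - 2|M|` (doubled), then `2 slowAux ≥ k`. -/
lemma le_two_mul_slowAux (fuel : ℕ) (A M : Finset V) (hMA : M ⊆ A) (hMne : M.Nonempty)
    (k : ℕ) (h : ∀ D, G.MaxIndepSubset M D → k ≤ 2 * M.card + 2 * G.slowAux fuel (A \ D)) :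
    k ≤ 2 * G.slowAux (fuel + 1) A := by
  rw [SimpleGraph.slowAux]
  have hmem : M ∈ A.powerset.filter fun M => M.Nonempty := by
    rw [Finset.mem_filter, Finset.mem_powerset]; exact ⟨hMA, hMne⟩
  refine le_trans ?_ (Nat.mul_le_mul_left 2 (Finset.le_sup hmem))
  obtain ⟨D0, hD0⟩ := maxIndep_exists G M
  have hne : {m | ∃ D : Finset V, G.MaxIndepSubset M D ∧ m = G.slowAux fuel (A \ D)}.Nonempty :=
    ⟨_, D0, hD0, rfl⟩
  obtain ⟨D, hD, heq⟩ := Nat.sInf_mem hne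
  rw [Nat.mul_add, heq]
  exact h D hD

end Game

section Deg
variable [DecidableEq V] (F : SimpleGraph V)

/-- Neighbors of `v` inside `A`. -/
noncomputable def nbrs (A : Finset V) (v : V) : Finset V :=
  @Finset.filter V (fun u => F.Adj v u) (Classical.decPred _) A

noncomputable def degA (A : Finset V) (v : V) : ℕ := (nbrs F A v).card

lemma mem_nbrs {A : Finset V} {v u : V} : u ∈ nbrs F A v ↔ u ∈ A ∧ F.Adj v u := by
  simp [nbrs]

lemma nbrs_sdiff (A D : Finset V) (v : V) : nbrs F (A \ D) v = nbrs F A v \ D := by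
  ext x; simp only [mem_nbrs, Finset.mem_sdiff]; tauto

lemma degA_sdiff_eq {A D : Finset V} {v : V} (h : ∀ d ∈ D, ¬ F.Adj v d) :
    degA F (A \ D) v = degA F A v := by
  unfold degA
  rw [nbrs_sdiff]
  congr 1
  rw [Finset.sdiff_eq_self_iff_disjoint, Finset.disjoint_left]
  intro x hx hxD
  exact h x hxD (mem_nbrs F |>.mp hx).2

lemma degA_mono {A B : Finset V} (h : B ⊆ A) (v : V) : degA F B v ≤ degA F A v :=
  Finset.card_le_card (fun x hx => (mem_nbrs F).mpr
    ⟨h ((mem_nbrs F).mp hx).1, ((mem_nbrs F).mp hx).2⟩)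

lemma degA_le_sdiff_add (A D : Finset V) (v : V) :
    degA F A v ≤ degA F (A \ D) v + D.card := by
  unfold degA
  rw [nbrs_sdiff]
  exact Finset.card_le_card_sdiff_add_card

lemma degA_sdiff_of_subset {A D : Finset V} {v : V} (h : D ⊆ nbrs F A v) :
    degA F (A \ D) v = degA F A v - D.card := by
  unfold degA
  rw [nbrs_sdiff, Finset.card_sdiff_of_subset h]

/-- Unique neighbor of a leaf. -/
lemma leaf_unique_nbr {A : Finset V} {v u : V} (hdeg : degA F A v = 1)
    (hu : u ∈ A) (hadj : F.Adj v u) : ∀ w ∈ A, F.Adj v w → w = u := by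
  obtain ⟨a, ha⟩ := Finset.card_eq_one.mp hdeg
  have hua : u = a := by
    have : u ∈ nbrs F A v := (mem_nbrs F).mpr ⟨hu, hadj⟩
    rwa [ha, Finset.mem_singleton] at this
  intro w hw hadjw
  have : w ∈ nbrs F A v := (mem_nbrs F).mpr ⟨hw, hadjw⟩
  rw [ha, Finset.mem_singleton] at this
  rw [this, hua]

/-- The potential function. -/
noncomputable def phiA (A : Finset V) : ℕ :=
  2 * A.card + (A.filter fun v => degA F A v = 1 ∨ degA F A v = 3).card

lemma phi_step {A : Finset V} (D T : Finset V) (hDA : D ⊆ A)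
    (hT : ∀ w ∈ A \ D, (degA F A w = 1 ∨ degA F A w = 3) →
      (degA F (A \ D) w = 1 ∨ degA F (A \ D) w = 3) ∨ w ∈ T) :
    phiA F A ≤ phiA F (A \ D) + 2 * D.card +
      (D.filter fun v => degA F A v = 1 ∨ degA F A v = 3).card + T.card := by
  have hcards : (A \ D).card + D.card = A.card := Finset.card_sdiff_add_card_eq_card hDA
  have hsub : (A.filter fun v => degA F A v = 1 ∨ degA F A v = 3) ⊆
      ((A \ D).filter fun v => degA F (A \ D) v = 1 ∨ degA F (A \ D) v = 3) ∪
        (D.filter fun v => degA F A v = 1 ∨ degA F A v = 3) ∪ T := by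
    intro w hw
    rw [Finset.mem_filter] at hw
    by_cases hwD : w ∈ D
    · exact Finset.mem_union_left _ (Finset.mem_union_right _
        (Finset.mem_filter.mpr ⟨hwD, hw.2⟩))
    · have hw' : w ∈ A \ D := Finset.mem_sdiff.mpr ⟨hw.1, hwD⟩
      rcases hT w hw' hw.2 with hgood | hwT
      · exact Finset.mem_union_left _ (Finset.mem_union_left _
          (Finset.mem_filter.mpr ⟨hw', hgood⟩))
      · exact Finset.mem_union_right _ hwT
  have h1 := Finset.card_le_card hsub
  have h2 := Finset.card_union_le
    (((A \ D).filter fun v => degA F (A \ D) v = 1 ∨ degA F (A \ D) v = 3) ∪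
      (D.filter fun v => degA F A v = 1 ∨ degA F A v = 3)) T
  have h3 := Finset.card_union_le
    ((A \ D).filter fun v => degA F (A \ D) v = 1 ∨ degA F (A \ D) v = 3)
    (D.filter fun v => degA F A v = 1 ∨ degA F A v = 3)
  unfold phiA
  omega

end Deg

section Structure
variable [DecidableEq V] [Fintype V] (F : SimpleGraph V)

lemma exists_degA_le_one (hF : F.IsAcyclic) (A : Finset V) (hA : A.Nonempty) :
    ∃ v ∈ A, degA F A v ≤ 1 := by
  by_contra hcon
  push_neg at hcon
  set S : Set ℕ := {n | ∃ (u v : V) (p : F.Walk u v), p.IsPath ∧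
    (∀ x ∈ p.support, x ∈ A) ∧ p.length = n} with hS
  obtain ⟨a, ha⟩ := hA
  have hSne : S.Nonempty := ⟨0, a, a, SimpleGraph.Walk.nil, by simp, by simp [ha], rfl⟩
  have hSbdd : BddAbove S := by
    refine ⟨Fintype.card V, fun n hn => ?_⟩
    obtain ⟨u, v, p, hp, -, hlen⟩ := hn
    have := hp.length_lt
    omega
  obtain ⟨u, v, p, hp, hsupp, hlen⟩ := Nat.sSup_mem hSne hSbdd
  have hmax : ∀ m ∈ S, m ≤ sSup S := fun m hm => le_csSup hSbdd hm
  have huA : u ∈ A := hsupp u p.start_mem_support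
  have h2 : 1 < (nbrs F A u).card := hcon u huA
  obtain ⟨x, hx, y, hy, hxy⟩ := Finset.one_lt_card.mp h2
  have key : ∀ w, w ∈ A → F.Adj u w → s(u, w) ∈ p.edges := by
    intro w hwA hadj
    by_cases hws : w ∈ p.support
    · by_cases he : s(w, u) ∈ (p.takeUntil w hws).edges
      · have := SimpleGraph.Walk.edges_takeUntil_subset p hws he
        rwa [Sym2.eq_swap] at this
      · exact absurd ((SimpleGraph.Walk.cons_isCycle_iff _ hadj.symm).mpr
          ⟨hp.takeUntil hws, he⟩) (hF _)
    · exfalso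
      have hp' : (SimpleGraph.Walk.cons hadj.symm p).IsPath := by
        rw [SimpleGraph.Walk.cons_isPath_iff]
        exact ⟨hp, hws⟩
      have hmem : p.length + 1 ∈ S := by
        refine ⟨w, v, SimpleGraph.Walk.cons hadj.symm p, hp', ?_, by simp⟩
        intro z hz
        rw [SimpleGraph.Walk.support_cons, List.mem_cons] at hz
        rcases hz with rfl | hz
        · exact hwA
        · exact hsupp z hz
      have := hmax _ hmem
      omega
  have hxA := ((mem_nbrs F).mp hx).1
  have hxadj := ((mem_nbrs F).mp hx).2
  have hyA := ((mem_nbrs F).mp hy).1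
  have hyadj := ((mem_nbrs F).mp hy).2
  have hkx := key x hxA hxadj
  have hky := key y hyA hyadj
  cases p with
  | nil => simp [SimpleGraph.Walk.edges_nil] at hkx
  | @cons _ b _ hadjb p' =>
    rw [SimpleGraph.Walk.cons_isPath_iff] at hp
    rw [SimpleGraph.Walk.edges_cons, List.mem_cons] at hkx hky
    have hxb : x = b := by
      rcases hkx with h | h
      · exact (Sym2.congr_right.mp h.symm).symm
      · exact absurd (SimpleGraph.Walk.fst_mem_support_of_mem_edges p' h) hp.2
    have hyb : y = b := by
      rcases hky with h | h
      · exact (Sym2.congr_right.mp h.symm).symm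
      · exact absurd (SimpleGraph.Walk.fst_mem_support_of_mem_edges p' h) hp.2
    exact hxy (hxb.trans hyb.symm)

lemma forest_structure (hF : F.IsAcyclic) :
    ∀ (n : ℕ) (A : Finset V), A.card ≤ n → A.Nonempty →
      (∃ v ∈ A, degA F A v = 0) ∨
      ∃ v ∈ A, ∃ u ∈ A, degA F A v = 1 ∧ F.Adj v u ∧
        (degA F A u ≤ 2 ∨ ∃ v2 ∈ A, v2 ≠ v ∧ F.Adj u v2 ∧ degA F A v2 = 1) := by
  intro n
  induction n with
  | zero =>
    intro A hcard hA
    rw [Nat.le_zero, Finset.card_eq_zero] at hcard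
    exact absurd hcard hA.ne_empty
  | succ n ih =>
    intro A hcard hA
    obtain ⟨v, hvA, hvdeg⟩ := exists_degA_le_one F hF A hA
    by_cases h0 : degA F A v = 0
    · exact Or.inl ⟨v, hvA, h0⟩
    have hv1 : degA F A v = 1 := by omega
    obtain ⟨u, hu⟩ := Finset.card_eq_one.mp hv1
    have huN : u ∈ nbrs F A v := by rw [hu]; exact Finset.mem_singleton_self u
    have huA : u ∈ A := ((mem_nbrs F).mp huN).1
    have hadjvu : F.Adj v u := ((mem_nbrs F).mp huN).2
    have huv : u ≠ v := fun h => F.irrefl (h ▸ hadjvu)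
    have huniq : ∀ w ∈ A, F.Adj v w → w = u :=
      leaf_unique_nbr F hv1 huA hadjvu
    by_cases hu2 : degA F A u ≤ 2
    · exact Or.inr ⟨v, hvA, u, huA, hv1, hadjvu, Or.inl hu2⟩
    by_cases hsec : ∃ v2 ∈ A, v2 ≠ v ∧ F.Adj u v2 ∧ degA F A v2 = 1
    · exact Or.inr ⟨v, hvA, u, huA, hv1, hadjvu, Or.inr hsec⟩
    -- recurse on A \ {v}
    set A' := A \ {v} with hA'
    have hvsing : ({v} : Finset V) ⊆ A := Finset.singleton_subset_iff.mpr hvA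
    have hA'card : A'.card ≤ n := by
      rw [hA', Finset.card_sdiff_of_subset hvsing, Finset.card_singleton]
      omega
    have huA' : u ∈ A' := Finset.mem_sdiff.mpr ⟨huA, by simpa using huv⟩
    have hu_deg' : 2 ≤ degA F A' u := by
      have h1 := degA_le_sdiff_add F A ({v} : Finset V) u
      rw [Finset.card_singleton, ← hA'] at h1
      omega
    have hpres : ∀ w, ¬ F.Adj w v → degA F A' w = degA F A w := by
      intro w hw
      exact degA_sdiff_eq F (by simpa using fun h : F.Adj w v => hw h)
    have hnotu : ∀ w ∈ A', w ≠ u → ¬ F.Adj w v := by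
      intro w hwA' hwu hadj
      exact hwu (huniq w (Finset.mem_sdiff.mp hwA').1 hadj.symm)
    rcases ih A' hA'card ⟨u, huA'⟩ with ⟨w, hwA', hw0⟩ | hleaf
    · -- isolated vertex in A' is isolated in A
      have hwu : w ≠ u := fun h => by rw [h] at hw0; omega
      have hwA : w ∈ A := (Finset.mem_sdiff.mp hwA').1
      have : degA F A w = 0 := by rw [← hpres w (hnotu w hwA' hwu)]; exact hw0
      exact Or.inl ⟨w, hwA, this⟩
    · obtain ⟨v', hv'A', u', hu'A', hv'1, hadj', halt⟩ := hleaf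
      have hv'u : v' ≠ u := fun h => by rw [h] at hv'1; omega
      have hv'A : v' ∈ A := (Finset.mem_sdiff.mp hv'A').1
      have hv'v : v' ≠ v := by
        have := (Finset.mem_sdiff.mp hv'A').2
        simpa using this
      have hdv' : degA F A v' = 1 := by rw [← hpres v' (hnotu v' hv'A' hv'u)]; exact hv'1
      have hu'A : u' ∈ A := (Finset.mem_sdiff.mp hu'A').1
      rcases halt with h2' | ⟨v2', hv2'A', hv2ne, hadj2, hdeg2⟩
      · by_cases huu' : u' = u
        · subst huu'
          exact Or.inr ⟨v, hvA, u', hu'A, hv1, hadjvu, Or.inr ⟨v', hv'A, hv'v, hadj'.symm, hdv'⟩⟩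
        · have hnadj : ¬ F.Adj u' v := fun h => huu' (huniq u' hu'A h.symm)
          have : degA F A u' ≤ 2 := by rw [← hpres u' hnadj]; exact h2'
          exact Or.inr ⟨v', hv'A, u', hu'A, hdv', hadj', Or.inl this⟩
      · have hv2'u : v2' ≠ u := fun h => by rw [h] at hdeg2; omega
        have hv2'A : v2' ∈ A := (Finset.mem_sdiff.mp hv2'A').1
        have hdv2 : degA F A v2' = 1 := by
          rw [← hpres v2' (hnotu v2' hv2'A' hv2'u)]; exact hdeg2
        by_cases huu' : u' = u
        · subst huu'
          exact Or.inr ⟨v, hvA, u', hu'A, hv1, hadjvu, Or.inr ⟨v', hv'A, hv'v, hadj'.symm, hdv'⟩⟩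
        · exact Or.inr ⟨v', hv'A, u', hu'A, hdv', hadj',
            Or.inr ⟨v2', hv2'A, hv2ne, hadj2, hdv2⟩⟩

end Structure

section Main
variable [DecidableEq V] [Fintype V]

lemma main_bound (F : SimpleGraph V) (hF : F.IsAcyclic) :
    ∀ (fuel : ℕ) (A : Finset V), (∀ v ∈ A, degA F A v ≤ 3) → A.card ≤ fuel →
      phiA F A ≤ 2 * F.slowAux fuel A := by
  intro fuel
  induction fuel with
  | zero =>
    intro A hdeg hcard
    rw [Nat.le_zero, Finset.card_eq_zero] at hcard
    subst hcard
    simp [phiA]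
  | succ fuel ih =>
    intro A hdeg hcard
    rcases A.eq_empty_or_nonempty with rfl | hA
    · simp [phiA]
    have step : ∀ (D T : Finset V), D ⊆ A → D.Nonempty →
        (∀ w ∈ A \ D, (degA F A w = 1 ∨ degA F A w = 3) →
          (degA F (A \ D) w = 1 ∨ degA F (A \ D) w = 3) ∨ w ∈ T) →
        ∀ c : ℕ,
          2 * D.card + (D.filter fun v => degA F A v = 1 ∨ degA F A v = 3).card + T.card ≤ c →
        phiA F A ≤ c + 2 * F.slowAux fuel (A \ D) := by
      intro D T hDA hDne hT c hc
      have h1 := phi_step F D T hDA hT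
      have h2 : phiA F (A \ D) ≤ 2 * F.slowAux fuel (A \ D) := by
        apply ih
        · intro w hw
          exact le_trans (degA_mono F Finset.sdiff_subset w) (hdeg w (Finset.mem_sdiff.mp hw).1)
        · have hc1 := Finset.card_sdiff_of_subset hDA
          have hc2 : 0 < D.card := Finset.card_pos.mpr hDne
          have hc3 := Finset.card_le_card hDA
          omega
      omega
    rcases forest_structure F hF A.card A le_rfl hA with ⟨v, hvA, hv0⟩ |
      ⟨v, hvA, u, huA, hv1, hadj, halt⟩
    · -- isolated vertex: M = D = {v}
      apply le_two_mul_slowAux F fuel A {v} (Finset.singleton_subset_iff.mpr hvA)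
        ⟨v, Finset.mem_singleton_self v⟩
      intro D hD
      have hDne : D.Nonempty := maxIndep_nonempty F ⟨v, Finset.mem_singleton_self v⟩ hD
      have hDeq : D = {v} := by
        rcases Finset.subset_singleton_iff.mp hD.1 with h | h
        · exact absurd h hDne.ne_empty
        · exact h
      subst hDeq
      rw [Finset.card_singleton]
      have hnb : nbrs F A v = ∅ := Finset.card_eq_zero.mp hv0
      apply step {v} ∅ (Finset.singleton_subset_iff.mpr hvA) ⟨v, Finset.mem_singleton_self v⟩
      · intro w hw hgood
        have hnadj : ∀ d ∈ ({v} : Finset V), ¬ F.Adj w d := by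
          intro d hd hadj'
          rw [Finset.mem_singleton] at hd
          rw [hd] at hadj' 
          have : w ∈ nbrs F A v := (mem_nbrs F).mpr ⟨(Finset.mem_sdiff.mp hw).1, hadj'.symm⟩
          rw [hnb] at this
          simp at this
        exact Or.inl (by rwa [degA_sdiff_eq F hnadj])
      · have hfil : (({v} : Finset V).filter fun x => degA F A x = 1 ∨ degA F A x = 3).card = 0 := by
          rw [Finset.filter_singleton, if_neg (by simp [hv0]), Finset.card_empty]
        rw [Finset.card_singleton, hfil, Finset.card_empty]
    · -- leaf v with neighbor u
      have hvu : v ≠ u := hadj.ne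
      have huniq : ∀ w ∈ A, F.Adj v w → w = u := leaf_unique_nbr F hv1 huA hadj
      have hu1 : 1 ≤ degA F A u :=
        Finset.card_pos.mpr ⟨v, (mem_nbrs F).mpr ⟨hvA, hadj.symm⟩⟩
      by_cases hu2 : degA F A u ≤ 2
      · -- M = {v, u}
        have hMA : ({v, u} : Finset V) ⊆ A := by
          intro x hx
          rcases Finset.mem_insert.mp hx with rfl | hx
          · exact hvA
          · rw [Finset.mem_singleton] at hx; subst hx; exact huA
        have hMcard : ({v, u} : Finset V).card = 2 := by
          rw [Finset.card_insert_of_notMem (by simpa using hvu), Finset.card_singleton]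
        apply le_two_mul_slowAux F fuel A {v, u} hMA ⟨v, Finset.mem_insert_self v _⟩
        intro D hD
        rw [hMcard]
        have hDne : D.Nonempty := maxIndep_nonempty F ⟨v, Finset.mem_insert_self v _⟩ hD
        have hDclass : D = {v} ∨ D = {u} := by
          by_cases hvD : v ∈ D <;> by_cases huD : u ∈ D
          · exact absurd hadj (hD.2.1 v hvD u huD)
          · left
            apply subset_antisymm _ (Finset.singleton_subset_iff.mpr hvD)
            intro x hx
            rcases Finset.mem_insert.mp (hD.1 hx) with rfl | hx'
            · exact Finset.mem_singleton_self x
            · rw [Finset.mem_singleton] at hx'; subst hx'; exact absurd hx huD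
          · right
            apply subset_antisymm _ (Finset.singleton_subset_iff.mpr huD)
            intro x hx
            rcases Finset.mem_insert.mp (hD.1 hx) with rfl | hx'
            · exact absurd hx hvD
            · exact hx'
          · exfalso
            obtain ⟨x, hx⟩ := hDne
            rcases Finset.mem_insert.mp (hD.1 hx) with rfl | hx'
            · exact hvD hx
            · rw [Finset.mem_singleton] at hx'; subst hx'; exact huD hx
        rcases hDclass with rfl | rfl
        · -- Painter deletes v
          apply step {v} {u} (Finset.singleton_subset_iff.mpr hvA) ⟨v, Finset.mem_singleton_self v⟩
          · intro w hw hgood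
            by_cases hwu : w = u
            · exact Or.inr (by simp [hwu])
            · have hnadj : ∀ d ∈ ({v} : Finset V), ¬ F.Adj w d := by
                intro d hd hadj'
                rw [Finset.mem_singleton] at hd
                rw [hd] at hadj' 
                exact hwu (huniq w (Finset.mem_sdiff.mp hw).1 hadj'.symm)
              exact Or.inl (by rwa [degA_sdiff_eq F hnadj])
          · have := Finset.card_filter_le ({v} : Finset V)
              (fun x => degA F A x = 1 ∨ degA F A x = 3)
            rw [Finset.card_singleton] at this ⊢
            rw [Finset.card_singleton]
            omega
        · -- Painter deletes u
          apply step {u} (nbrs F A u) (Finset.singleton_subset_iff.mpr huA)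
            ⟨u, Finset.mem_singleton_self u⟩
          · intro w hw hgood
            by_cases hwu : F.Adj u w
            · exact Or.inr ((mem_nbrs F).mpr ⟨(Finset.mem_sdiff.mp hw).1, hwu⟩)
            · have hnadj : ∀ d ∈ ({u} : Finset V), ¬ F.Adj w d := by
                intro d hd hadj'
                rw [Finset.mem_singleton] at hd
                rw [hd] at hadj' 
                exact hwu hadj'.symm
              exact Or.inl (by rwa [degA_sdiff_eq F hnadj])
          · rw [Finset.card_singleton]
            have hnbc : (nbrs F A u).card = degA F A u := rfl
            have hdu : degA F A u = 1 ∨ degA F A u = 2 := by omega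
            rcases hdu with hdu | hdu
            · have := Finset.card_filter_le ({u} : Finset V)
                (fun x => degA F A x = 1 ∨ degA F A x = 3)
              rw [Finset.card_singleton] at this
              omega
            · have hfil : (({u} : Finset V).filter
                  fun x => degA F A x = 1 ∨ degA F A x = 3).card = 0 := by
                rw [Finset.filter_singleton, if_neg (by simp [hdu]), Finset.card_empty]
              rw [hfil]
              omega
      · -- degree of u is 3: second leaf exists
        have hu3 : degA F A u = 3 := le_antisymm (hdeg u huA) (by omega)
        rcases halt with h | ⟨v2, hv2A, hv2v, hadj2, hv21⟩
        · omega
        have huniq2 : ∀ w ∈ A, F.Adj v2 w → w = u := leaf_unique_nbr F hv21 huA hadj2.symm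
        have hv2u : v2 ≠ u := fun h => by rw [h] at hv21; omega
        have hMA : ({v, v2, u} : Finset V) ⊆ A := by
          intro x hx
          simp only [Finset.mem_insert, Finset.mem_singleton] at hx
          rcases hx with rfl | rfl | rfl
          · exact hvA
          · exact hv2A
          · exact huA
        have hMcard : ({v, v2, u} : Finset V).card = 3 := by
          rw [Finset.card_insert_of_notMem (by simp [Ne.symm hv2v, hvu]),
            Finset.card_insert_of_notMem (by simpa using hv2u), Finset.card_singleton]
        apply le_two_mul_slowAux F fuel A {v, v2, u} hMA ⟨v, Finset.mem_insert_self v _⟩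
        intro D hD
        rw [hMcard]
        have hDM := hD.1
        have hxM : ∀ x ∈ D, x = v ∨ x = v2 ∨ x = u := by
          intro x hx
          have := hDM hx
          simpa using this
        by_cases huD : u ∈ D
        · -- D = {u}
          have hDeq : D = {u} := by
            apply subset_antisymm _ (Finset.singleton_subset_iff.mpr huD)
            intro x hx
            rcases hxM x hx with rfl | rfl | rfl
            · exact absurd hadj (hD.2.1 x hx u huD)
            · exact absurd hadj2 ((hD.2.1 u huD x hx))
            · exact Finset.mem_singleton_self x
          subst hDeq
          apply step {u} (nbrs F A u) (Finset.singleton_subset_iff.mpr huA)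
            ⟨u, Finset.mem_singleton_self u⟩
          · intro w hw hgood
            by_cases hwu : F.Adj u w
            · exact Or.inr ((mem_nbrs F).mpr ⟨(Finset.mem_sdiff.mp hw).1, hwu⟩)
            · have hnadj : ∀ d ∈ ({u} : Finset V), ¬ F.Adj w d := by
                intro d hd hadj'
                rw [Finset.mem_singleton] at hd
                rw [hd] at hadj' 
                exact hwu hadj'.symm
              exact Or.inl (by rwa [degA_sdiff_eq F hnadj])
          · have := Finset.card_filter_le ({u} : Finset V)
              (fun x => degA F A x = 1 ∨ degA F A x = 3)
            rw [Finset.card_singleton] at this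
            rw [Finset.card_singleton]
            have hnbc : (nbrs F A u).card = degA F A u := rfl
            omega
        · -- D = {v, v2}
          have hvD : v ∈ D := by
            by_contra hvD
            obtain ⟨x, hxD, hxadj⟩ := hD.2.2 v (Finset.mem_insert_self v _) hvD
            have hxA : x ∈ A := hMA (hDM hxD)
            have := huniq x hxA hxadj.symm
            subst this
            exact huD hxD
          have hv2D : v2 ∈ D := by
            by_contra hv2D
            obtain ⟨x, hxD, hxadj⟩ := hD.2.2 v2 (by simp) hv2D
            have hxA : x ∈ A := hMA (hDM hxD)
            have := huniq2 x hxA hxadj.symm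
            subst this
            exact huD hxD
          have hDeq : D = {v, v2} := by
            apply subset_antisymm
            · intro x hx
              rcases hxM x hx with rfl | rfl | rfl
              · exact Finset.mem_insert_self x _
              · simp
              · exact absurd hx huD
            · intro x hx
              rcases Finset.mem_insert.mp hx with rfl | hx'
              · exact hvD
              · rw [Finset.mem_singleton] at hx'; subst hx'; exact hv2D
          subst hDeq
          have hDA' : ({v, v2} : Finset V) ⊆ A := by
            intro x hx
            rcases Finset.mem_insert.mp hx with rfl | hx'
            · exact hvA
            · rw [Finset.mem_singleton] at hx'; subst hx'; exact hv2A
          have hDcard : ({v, v2} : Finset V).card = 2 := by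
            rw [Finset.card_insert_of_notMem (by simpa using Ne.symm hv2v),
              Finset.card_singleton]
          apply step {v, v2} ∅ hDA' ⟨v, Finset.mem_insert_self v _⟩
          · intro w hw hgood
            by_cases hwu : w = u
            · subst hwu
              left
              have hsub : ({v, v2} : Finset V) ⊆ nbrs F A w := by
                intro x hx
                rcases Finset.mem_insert.mp hx with rfl | hx'
                · exact (mem_nbrs F).mpr ⟨hvA, hadj.symm⟩
                · rw [Finset.mem_singleton] at hx'; subst hx'
                  exact (mem_nbrs F).mpr ⟨hv2A, hadj2⟩
              rw [degA_sdiff_of_subset F hsub, hDcard, hu3]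
              omega
            · have hnadj : ∀ d ∈ ({v, v2} : Finset V), ¬ F.Adj w d := by
                intro d hd hadj'
                rcases Finset.mem_insert.mp hd with rfl | hd'
                · exact hwu (huniq w (Finset.mem_sdiff.mp hw).1 hadj'.symm)
                · rw [Finset.mem_singleton] at hd'
                  rw [hd'] at hadj'
                  exact hwu (huniq2 w (Finset.mem_sdiff.mp hw).1 hadj'.symm)
              exact Or.inl (by rwa [degA_sdiff_eq F hnadj])
          · have := Finset.card_filter_le ({v, v2} : Finset V)
              (fun x => degA F A x = 1 ∨ degA F A x = 3)
            rw [hDcard] at this ⊢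
            rw [Finset.card_empty]
            omega

end Main


/-- If `H` is a spanning subgraph of `G` then `𝓈(H) ≤ 𝓈(G)`.  In particular,
if `G` contains a spanning forest in which every vertex has degree `1` or `3`,
then `2·𝓈(G) ≥ 3·|V(G)|`. -/
theorem slow_coloring_spanning_subgraph {V : Type*} [Fintype V] [DecidableEq V]
    (G H : SimpleGraph V) (hHG : H ≤ G) :
    H.sumColorCost ≤ G.sumColorCost ∧
      ((∃ F : SimpleGraph V, F ≤ G ∧ F.IsAcyclic ∧
          ∀ v, (F.neighborSet v).ncard = 1 ∨ (F.neighborSet v).ncard = 3) →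
        3 * Fintype.card V ≤ 2 * G.sumColorCost) := by
  constructor
  · exact slowAux_mono_G G H hHG (Fintype.card V) Finset.univ
  · rintro ⟨F, hFG, hFac, hFdeg⟩
    have hncard : ∀ v, (F.neighborSet v).ncard = degA F Finset.univ v := by
      intro v
      classical
      rw [Set.ncard_eq_toFinset_card']
      congr 1
      ext w
      simp [mem_nbrs, SimpleGraph.mem_neighborSet]
    have hdegs : ∀ v, degA F Finset.univ v = 1 ∨ degA F Finset.univ v = 3 := by
      intro v
      rw [← hncard v]
      exact hFdeg v
    have hdeg3 : ∀ v ∈ Finset.univ, degA F Finset.univ v ≤ 3 := by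
      intro v _
      rcases hdegs v with h | h <;> omega
    have hmain := main_bound F hFac (Fintype.card V) Finset.univ hdeg3
      (le_of_eq (Finset.card_univ))
    have hphi : phiA F Finset.univ = 3 * Fintype.card V := by
      unfold phiA
      rw [Finset.filter_true_of_mem (fun v _ => hdegs v), Finset.card_univ]
      ring
    calc 3 * Fintype.card V = phiA F Finset.univ := hphi.symm
      _ ≤ 2 * F.slowAux (Fintype.card V) Finset.univ := hmain
      _ = 2 * F.sumColorCost := rfl
      _ ≤ 2 * G.sumColorCost :=
          Nat.mul_le_mul_left 2 (slowAux_mono_G G F hFG (Fintype.card V) Finset.univ)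
end

section
/- Every finite simple graph in which every vertex has degree 1 or 3 contains a spanning forest (an acyclic spanning subgraph) in which every vertex has degree 1 or 3. -/
/-! Definitions for the slow coloring game (sum-color cost), paintability,
connectivity and auxiliary graphs. -/

variable {V : Type*}

section SpanningForestHelpers

open SimpleGraph

private lemma reach_sup_edge {H : SimpleGraph V} {u v x y : V}
    (h : (H ⊔ SimpleGraph.fromEdgeSet {s(u, v)}).Reachable x y) :
    H.Reachable x y ∨ (H.Reachable x u ∧ H.Reachable v y) ∨
      (H.Reachable x v ∧ H.Reachable u y) := by
  obtain ⟨w⟩ := h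
  induction w with
  | nil => exact Or.inl (SimpleGraph.Reachable.refl _)
  | @cons a b c hab p ih =>
    rcases hab with hab | hab
    · rcases ih with h1 | ⟨h1, h2⟩ | ⟨h1, h2⟩
      · exact Or.inl (hab.reachable.trans h1)
      · exact Or.inr (Or.inl ⟨hab.reachable.trans h1, h2⟩)
      · exact Or.inr (Or.inr ⟨hab.reachable.trans h1, h2⟩)
    · rw [SimpleGraph.fromEdgeSet_adj, Set.mem_singleton_iff, Sym2.eq_iff] at hab
      rcases hab.1 with ⟨rfl, rfl⟩ | ⟨rfl, rfl⟩
      · rcases ih with h1 | ⟨h1, h2⟩ | ⟨h1, h2⟩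
        · exact Or.inr (Or.inl ⟨SimpleGraph.Reachable.refl _, h1⟩)
        · exact Or.inr (Or.inl ⟨SimpleGraph.Reachable.refl _, h2⟩)
        · exact Or.inl h2
      · rcases ih with h1 | ⟨h1, h2⟩ | ⟨h1, h2⟩
        · exact Or.inr (Or.inr ⟨SimpleGraph.Reachable.refl _, h1⟩)
        · exact Or.inl h2
        · exact Or.inr (Or.inr ⟨SimpleGraph.Reachable.refl _, h2⟩)

private lemma edge_le {G : SimpleGraph V} {u v : V} (h : G.Adj u v) :
    SimpleGraph.fromEdgeSet {s(u, v)} ≤ G := by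
  intro a b hab
  rw [SimpleGraph.fromEdgeSet_adj, Set.mem_singleton_iff, Sym2.eq_iff] at hab
  rcases hab.1 with ⟨rfl, rfl⟩ | ⟨rfl, rfl⟩
  · exact h
  · exact h.symm

private lemma ncard_neighborSet_eq_degree [Fintype V] (G : SimpleGraph V)
    [DecidableRel G.Adj] (v : V) :
    (G.neighborSet v).ncard = G.degree v := by
  rw [SimpleGraph.degree, ← Set.ncard_coe_finset]
  congr 1
  ext x
  simp

private lemma even_card_of_sum_odd {α : Type*} {s : Finset α} {f : α → ℕ}
    (hf : ∀ x ∈ s, Odd (f x)) (h : Even (∑ x ∈ s, f x)) : Even s.card := by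
  rw [Nat.even_iff] at h ⊢
  rw [Finset.sum_nat_mod] at h
  have h2 : ∑ x ∈ s, f x % 2 = ∑ _x ∈ s, 1 :=
    Finset.sum_congr rfl fun x hx => Nat.odd_iff.mp (hf x hx)
  rw [h2, Finset.sum_const, smul_eq_mul, mul_one] at h
  omega

private lemma comp_even [Fintype V] [DecidableEq V] (G : SimpleGraph V)
    (hdeg : ∀ v, Odd ((G.neighborSet v).ncard)) (w : V) :
    Even ({x | G.Reachable w x}.ncard) := by
  classical
  let H : SimpleGraph V :=
    { Adj := fun x y => G.Adj x y ∧ G.Reachable w x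
      symm := by
        constructor
        rintro x y ⟨h, hr⟩
        exact ⟨h.symm, hr.trans h.reachable⟩
      loopless := ⟨fun x h => G.loopless.irrefl x h.1⟩ }
  have hHadj : ∀ x y, H.Adj x y ↔ (G.Adj x y ∧ G.Reachable w x) := fun _ _ => Iff.rfl
  have hsum : Even (∑ v, H.degree v) := by
    rw [SimpleGraph.sum_degrees_eq_twice_card_edges]
    exact even_two_mul _
  have hdegH : ∀ v, H.degree v =
      if G.Reachable w v then (G.neighborSet v).ncard else 0 := by
    intro v
    by_cases h : G.Reachable w v
    · rw [if_pos h, ncard_neighborSet_eq_degree]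
      have hnb : H.neighborFinset v = G.neighborFinset v := by
        ext y
        simp only [SimpleGraph.mem_neighborFinset, hHadj]
        exact ⟨fun hy => hy.1, fun hy => ⟨hy, h⟩⟩
      rw [SimpleGraph.degree, SimpleGraph.degree, hnb]
    · rw [if_neg h, SimpleGraph.degree, Finset.card_eq_zero]
      ext y
      simp only [SimpleGraph.mem_neighborFinset, hHadj, Finset.notMem_empty, iff_false]
      rintro ⟨-, hr⟩
      exact h hr
  rw [Finset.sum_congr rfl (fun v _ => hdegH v), Finset.sum_ite, Finset.sum_const_zero,
    add_zero] at hsum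
  have hcard := even_card_of_sum_odd (fun x _ => hdeg x) hsum
  have heq : {x | G.Reachable w x}.ncard =
      (Finset.univ.filter fun x => G.Reachable w x).card := by
    rw [Set.ncard_eq_toFinset_card']
    congr 1
    ext x
    simp
  rwa [heq]

private lemma exists_forest_parity [Fintype V] [DecidableEq V] :
    ∀ (n : ℕ) (G : SimpleGraph V) (p : V → Prop), G.edgeSet.ncard ≤ n →
      (∀ w, Even ({x | p x ∧ G.Reachable w x}.ncard)) →
      ∃ F, F ≤ G ∧ F.IsAcyclic ∧ ∀ v, (Odd ((F.neighborSet v).ncard) ↔ p v) := by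
  intro n
  induction n with
  | zero =>
    intro G p hn hcond
    have hG : G = ⊥ := by
      rw [← SimpleGraph.edgeSet_eq_empty]
      exact (Set.ncard_eq_zero (Set.toFinite _)).mp (Nat.le_zero.mp hn)
    subst hG
    refine ⟨⊥, le_rfl, SimpleGraph.isAcyclic_iff_forall_adj_isBridge.mpr (by simp),
      fun v => ?_⟩
    have hpv : ¬ p v := by
      intro hp
      have h1 : {x | p x ∧ (⊥ : SimpleGraph V).Reachable v x} = {v} := by
        ext x
        simp only [Set.mem_setOf_eq, SimpleGraph.reachable_bot, Set.mem_singleton_iff]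
        constructor
        · rintro ⟨-, rfl⟩; rfl
        · rintro rfl; exact ⟨hp, rfl⟩
      have h2 := hcond v
      rw [h1, Set.ncard_singleton] at h2
      simp at h2
    have hns : (⊥ : SimpleGraph V).neighborSet v = ∅ := by
      ext y; simp
    simp [hpv, hns]
  | succ n ih =>
    intro G p hn hcond
    classical
    by_cases hbot : G = ⊥
    · subst hbot
      exact ih ⊥ p (by simp) hcond
    have hedge : ∃ u v : V, G.Adj u v := by
      obtain ⟨e, he⟩ := SimpleGraph.edgeSet_nonempty.mpr hbot
      revert he
      refine Sym2.ind ?_ e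
      intro a b hab
      exact ⟨a, b, hab⟩
    obtain ⟨u, v, huv⟩ := hedge
    set G' := G \ SimpleGraph.fromEdgeSet {s(u, v)} with hG'
    have hle' : G' ≤ G := sdiff_le
    have hsup : G' ⊔ SimpleGraph.fromEdgeSet {s(u, v)} = G := sdiff_sup_cancel (edge_le huv)
    have hcard : G'.edgeSet.ncard ≤ n := by
      have h1 : G'.edgeSet = G.edgeSet \ {s(u, v)} := by
        rw [hG', SimpleGraph.edgeSet_sdiff, SimpleGraph.edgeSet_fromEdgeSet,
          SimpleGraph.edgeSet_sdiff_sdiff_isDiag]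
      have h2 : s(u, v) ∈ G.edgeSet := huv
      have h3 := Set.ncard_diff_singleton_add_one h2 (Set.toFinite _)
      rw [← h1] at h3
      omega
    have hsplit : ∀ x y : V, G.Reachable x y →
        G'.Reachable x y ∨ (G'.Reachable x u ∧ G'.Reachable v y) ∨
          (G'.Reachable x v ∧ G'.Reachable u y) := by
      intro x y h
      exact reach_sup_edge (by rwa [hsup])
    by_cases hbr : G'.Reachable u v
    · -- the edge lies on a cycle; delete it, components unchanged
      have hreq : ∀ x y, G.Reachable x y ↔ G'.Reachable x y := by
        intro x y
        constructor
        · intro h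
          rcases hsplit x y h with h1 | ⟨h1, h2⟩ | ⟨h1, h2⟩
          · exact h1
          · exact (h1.trans hbr).trans h2
          · exact (h1.trans hbr.symm).trans h2
        · exact fun h => h.mono hle'
      have hcond' : ∀ w, Even ({x | p x ∧ G'.Reachable w x}.ncard) := by
        intro w
        have heq : {x | p x ∧ G'.Reachable w x} = {x | p x ∧ G.Reachable w x} := by
          ext x
          simp only [Set.mem_setOf_eq, hreq]
        rw [heq]
        exact hcond w
      obtain ⟨F, h1, h2, h3⟩ := ih G' p hcard hcond'
      exact ⟨F, h1.trans hle', h2, h3⟩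
    · -- bridge case
      have hA : {x | p x ∧ G.Reachable u x} =
          {x | p x ∧ G'.Reachable u x} ∪ {x | p x ∧ G'.Reachable v x} := by
        ext x
        simp only [Set.mem_setOf_eq, Set.mem_union]
        constructor
        · rintro ⟨hp, hr⟩
          rcases hsplit u x hr with h1 | ⟨h1, h2⟩ | ⟨h1, h2⟩
          · exact Or.inl ⟨hp, h1⟩
          · exact Or.inr ⟨hp, h2⟩
          · exact absurd h1 hbr
        · rintro (⟨hp, hr⟩ | ⟨hp, hr⟩)
          · exact ⟨hp, hr.mono hle'⟩
          · exact ⟨hp, huv.reachable.trans (hr.mono hle')⟩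
      have hdisj : Disjoint {x | p x ∧ G'.Reachable u x} {x | p x ∧ G'.Reachable v x} := by
        rw [Set.disjoint_left]
        rintro x ⟨-, h1⟩ ⟨-, h2⟩
        exact hbr (h1.trans h2.symm)
      have hsum : Even ({x | p x ∧ G'.Reachable u x}.ncard +
          {x | p x ∧ G'.Reachable v x}.ncard) := by
        rw [← Set.ncard_union_eq hdisj (Set.toFinite _) (Set.toFinite _), ← hA]
        exact hcond u
      have hxu : ∀ x, G'.Reachable u x → x ≠ v := fun x h hx => hbr (hx ▸ h)
      have hxv : ∀ x, G'.Reachable v x → x ≠ u := fun x h hx => hbr (hx ▸ h).symm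
      have hother : ∀ w, ¬ G'.Reachable w u → ¬ G'.Reachable w v →
          ∀ x, G'.Reachable w x ↔ G.Reachable w x := by
        intro w h1 h2 x
        constructor
        · exact fun h => h.mono hle'
        · intro h
          rcases hsplit w x h with h3 | ⟨h3, h4⟩ | ⟨h3, h4⟩
          · exact h3
          · exact absurd h3 h1
          · exact absurd h3 h2
      by_cases hpar : Even ({x | p x ∧ G'.Reachable u x}.ncard)
      · -- both halves even: just delete the edge
        have hcond' : ∀ w, Even ({x | p x ∧ G'.Reachable w x}.ncard) := by
          intro w
          by_cases h1 : G'.Reachable w u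
          · have heq : {x | p x ∧ G'.Reachable w x} = {x | p x ∧ G'.Reachable u x} := by
              ext x
              simp only [Set.mem_setOf_eq]
              exact and_congr_right fun _ => ⟨fun h => h1.symm.trans h, fun h => h1.trans h⟩
            rw [heq]; exact hpar
          · by_cases h2 : G'.Reachable w v
            · have heq : {x | p x ∧ G'.Reachable w x} = {x | p x ∧ G'.Reachable v x} := by
                ext x
                simp only [Set.mem_setOf_eq]
                exact and_congr_right fun _ => ⟨fun h => h2.symm.trans h, fun h => h2.trans h⟩
              rw [heq]
              exact (Nat.even_add.mp hsum).mp hpar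
            · have heq : {x | p x ∧ G'.Reachable w x} = {x | p x ∧ G.Reachable w x} := by
                ext x
                simp only [Set.mem_setOf_eq, hother w h1 h2]
              rw [heq]; exact hcond w
        obtain ⟨F, h1, h2, h3⟩ := ih G' p hcard hcond'
        exact ⟨F, h1.trans hle', h2, h3⟩
      · -- both halves odd: flip parities at u and v, keep the edge
        set p' : V → Prop := fun x => if x = u ∨ x = v then ¬ p x else p x with hp'
        have hp'u : p' u ↔ ¬ p u := by simp [hp']
        have hp'v : p' v ↔ ¬ p v := by simp [hp']
        have hp'other : ∀ x, x ≠ u → x ≠ v → (p' x ↔ p x) := by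
          intro x h1 h2; simp [hp', h1, h2]
        have hAuodd : Odd ({x | p x ∧ G'.Reachable u x}.ncard) :=
          Nat.not_even_iff_odd.mp hpar
        have hAvodd : Odd ({x | p x ∧ G'.Reachable v x}.ncard) := by
          rcases Nat.even_or_odd ({x | p x ∧ G'.Reachable v x}.ncard) with h | h
          · exact absurd ((Nat.even_add.mp hsum).mpr h) hpar
          · exact h
        -- evenness of flipped counts in each of the two halves
        have flip_even : ∀ (a : V), (∀ x, G'.Reachable a x → (p' x ↔ (if x = a then ¬ p x else p x))) →
            Odd ({x | p x ∧ G'.Reachable a x}.ncard) →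
            Even ({x | p' x ∧ G'.Reachable a x}.ncard) := by
          intro a hloc hodd
          by_cases hpa : p a
          · have heq : {x | p' x ∧ G'.Reachable a x} =
                {x | p x ∧ G'.Reachable a x} \ {a} := by
              ext x
              simp only [Set.mem_setOf_eq, Set.mem_diff, Set.mem_singleton_iff]
              constructor
              · rintro ⟨hp1, hr⟩
                have := (hloc x hr).mp hp1
                by_cases hx : x = a
                · subst hx; rw [if_pos rfl] at this; exact absurd hpa this
                · rw [if_neg hx] at this; exact ⟨⟨this, hr⟩, hx⟩
              · rintro ⟨⟨hp1, hr⟩, hx⟩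
                refine ⟨(hloc x hr).mpr ?_, hr⟩
                rw [if_neg hx]; exact hp1
            rw [heq, Set.ncard_diff_singleton_of_mem
              (show a ∈ {x | p x ∧ G'.Reachable a x} from ⟨hpa, SimpleGraph.Reachable.refl a⟩)]
            obtain ⟨k, hk⟩ := hodd
            rw [Nat.even_iff]
            omega
          · have heq : {x | p' x ∧ G'.Reachable a x} =
                insert a {x | p x ∧ G'.Reachable a x} := by
              ext x
              simp only [Set.mem_setOf_eq, Set.mem_insert_iff]
              constructor
              · rintro ⟨hp1, hr⟩
                have := (hloc x hr).mp hp1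
                by_cases hx : x = a
                · exact Or.inl hx
                · rw [if_neg hx] at this; exact Or.inr ⟨this, hr⟩
              · rintro (rfl | ⟨hp1, hr⟩)
                · exact ⟨(hloc x (SimpleGraph.Reachable.refl x)).mpr (by
                    rw [if_pos rfl]; exact hpa), SimpleGraph.Reachable.refl x⟩
                · refine ⟨(hloc x hr).mpr ?_, hr⟩
                  by_cases hx : x = a
                  · subst hx; exact absurd hp1 hpa
                  · rw [if_neg hx]; exact hp1
            rw [heq, Set.ncard_insert_of_notMem
              (show a ∉ {x | p x ∧ G'.Reachable a x} from fun h => hpa h.1) (Set.toFinite _)]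
            obtain ⟨k, hk⟩ := hodd
            rw [Nat.even_iff]
            omega
        have hAu' : Even ({x | p' x ∧ G'.Reachable u x}.ncard) := by
          refine flip_even u (fun x hr => ?_) hAuodd
          by_cases hx : x = u
          · subst hx; rw [if_pos rfl]; exact hp'u
          · rw [if_neg hx]; exact hp'other x hx (hxu x hr)
        have hAv' : Even ({x | p' x ∧ G'.Reachable v x}.ncard) := by
          refine flip_even v (fun x hr => ?_) hAvodd
          by_cases hx : x = v
          · subst hx; rw [if_pos rfl]; exact hp'v
          · rw [if_neg hx]; exact hp'other x (hxv x hr) hx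
        have hcond' : ∀ w, Even ({x | p' x ∧ G'.Reachable w x}.ncard) := by
          intro w
          by_cases h1 : G'.Reachable w u
          · have heq : {x | p' x ∧ G'.Reachable w x} = {x | p' x ∧ G'.Reachable u x} := by
              ext x
              simp only [Set.mem_setOf_eq]
              exact and_congr_right fun _ => ⟨fun h => h1.symm.trans h, fun h => h1.trans h⟩
            rw [heq]; exact hAu'
          · by_cases h2 : G'.Reachable w v
            · have heq : {x | p' x ∧ G'.Reachable w x} = {x | p' x ∧ G'.Reachable v x} := by
                ext x
                simp only [Set.mem_setOf_eq]
                exact and_congr_right fun _ => ⟨fun h => h2.symm.trans h, fun h => h2.trans h⟩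
              rw [heq]; exact hAv'
            · have heq : {x | p' x ∧ G'.Reachable w x} = {x | p x ∧ G.Reachable w x} := by
                ext x
                simp only [Set.mem_setOf_eq]
                constructor
                · rintro ⟨hp1, hr⟩
                  have hxu' : x ≠ u := fun hx => h1 (hx ▸ hr)
                  have hxv' : x ≠ v := fun hx => h2 (hx ▸ hr)
                  exact ⟨(hp'other x hxu' hxv').mp hp1, (hother w h1 h2 x).mp hr⟩
                · rintro ⟨hp1, hr⟩
                  have hr' := (hother w h1 h2 x).mpr hr
                  have hxu' : x ≠ u := fun hx => h1 (hx ▸ hr')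
                  have hxv' : x ≠ v := fun hx => h2 (hx ▸ hr')
                  exact ⟨(hp'other x hxu' hxv').mpr hp1, hr'⟩
              rw [heq]; exact hcond w
        obtain ⟨F', hFle, hFac, hFdeg⟩ := ih G' p' hcard hcond'
        refine ⟨F' ⊔ SimpleGraph.fromEdgeSet {s(u, v)}, ?_, ?_, ?_⟩
        · exact sup_le (hFle.trans hle') (edge_le huv)
        · -- acyclicity
          rw [SimpleGraph.isAcyclic_iff_forall_adj_isBridge]
          intro x y hxy
          rw [SimpleGraph.isBridge_iff]
          rw [SimpleGraph.deleteEdges]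
          intro hr
          rcases hxy with hxy | hxy
          · have hbF : ¬ (F' \ SimpleGraph.fromEdgeSet {s(x, y)}).Reachable x y :=
              (SimpleGraph.isBridge_iff.mp
                (SimpleGraph.isAcyclic_iff_forall_adj_isBridge.mp hFac hxy))
            have hr2 : ((F' \ SimpleGraph.fromEdgeSet {s(x, y)}) ⊔
                SimpleGraph.fromEdgeSet {s(u, v)}).Reachable x y := by
              refine hr.mono ?_
              rw [sup_sdiff]
              exact sup_le le_sup_left (sdiff_le.trans le_sup_right)
            have hm : (F' \ SimpleGraph.fromEdgeSet {s(x, y)}) ≤ G' := sdiff_le.trans hFle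
            rcases reach_sup_edge hr2 with h1 | ⟨h1, h2⟩ | ⟨h1, h2⟩
            · exact hbF h1
            · exact hbr ((h1.mono hm).symm.trans
                ((hFle hxy).reachable.trans (h2.mono hm).symm))
            · exact hbr ((h2.mono hm).trans
                ((hFle hxy).symm.reachable.trans (h1.mono hm)))
          · have hsub : (F' ⊔ SimpleGraph.fromEdgeSet {s(u, v)}) \
                SimpleGraph.fromEdgeSet {s(u, v)} ≤ G' := by
              rw [sup_sdiff, sdiff_self, sup_bot_eq]
              exact sdiff_le.trans hFle
            rw [SimpleGraph.fromEdgeSet_adj, Set.mem_singleton_iff] at hxy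
            have hee := hxy.1
            rw [hee] at hr
            have hG2 := hr.mono hsub
            rcases Sym2.eq_iff.mp hee with ⟨h1, h2⟩ | ⟨h1, h2⟩
            · rw [h1, h2] at hG2
              exact hbr hG2
            · rw [h1, h2] at hG2
              exact hbr hG2.symm
        · -- degree parities
          intro x
          by_cases hx : x = u
          · subst hx
            have hnb : (F' ⊔ SimpleGraph.fromEdgeSet {s(x, v)}).neighborSet x =
                insert v (F'.neighborSet x) := by
              ext y
              simp only [SimpleGraph.mem_neighborSet, SimpleGraph.sup_adj,
                SimpleGraph.fromEdgeSet_adj, Set.mem_singleton_iff, Sym2.eq_iff,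
                Set.mem_insert_iff]
              constructor
              · rintro (h | ⟨(⟨-, rfl⟩ | ⟨h1, rfl⟩), h2⟩)
                · exact Or.inr h
                · exact Or.inl rfl
                · exact absurd h1 huv.ne
              · rintro (rfl | h)
                · exact Or.inr ⟨by simp, huv.ne⟩
                · exact Or.inl h
            have hvnot : v ∉ F'.neighborSet x := fun h => hbr ((hFle h).reachable)
            rw [hnb, Set.ncard_insert_of_notMem hvnot (Set.toFinite _),
              Nat.odd_add_one, hFdeg x, hp'u, not_not]
          · by_cases hx2 : x = v
            · subst hx2
              have hnb : (F' ⊔ SimpleGraph.fromEdgeSet {s(u, x)}).neighborSet x =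
                  insert u (F'.neighborSet x) := by
                ext y
                simp only [SimpleGraph.mem_neighborSet, SimpleGraph.sup_adj,
                  SimpleGraph.fromEdgeSet_adj, Set.mem_singleton_iff, Sym2.eq_iff,
                  Set.mem_insert_iff]
                constructor
                · rintro (h | ⟨(⟨h1, rfl⟩ | ⟨-, rfl⟩), h2⟩)
                  · exact Or.inr h
                  · exact absurd h1.symm huv.ne
                  · exact Or.inl rfl
                · rintro (rfl | h)
                  · exact Or.inr ⟨by simp, huv.ne.symm⟩
                  · exact Or.inl h
              have hunot : u ∉ F'.neighborSet x := fun h => hbr ((hFle h).reachable).symm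
              rw [hnb, Set.ncard_insert_of_notMem hunot (Set.toFinite _),
                Nat.odd_add_one, hFdeg x, hp'v, not_not]
            · have hnb : (F' ⊔ SimpleGraph.fromEdgeSet {s(u, v)}).neighborSet x =
                  F'.neighborSet x := by
                ext y
                simp only [SimpleGraph.mem_neighborSet, SimpleGraph.sup_adj,
                  SimpleGraph.fromEdgeSet_adj, Set.mem_singleton_iff, Sym2.eq_iff]
                constructor
                · rintro (h | ⟨(⟨rfl, -⟩ | ⟨rfl, -⟩), -⟩)
                  · exact h
                  · exact absurd rfl hx
                  · exact absurd rfl hx2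
                · exact Or.inl
              rw [hnb, hFdeg x, hp'other x hx hx2]

end SpanningForestHelpers

/-- Every graph in which every vertex has degree `1` or `3` contains a spanning
forest in which every vertex has degree `1` or `3`. -/
theorem spanning_forest_of_deg_one_or_three {V : Type*} [Fintype V] [DecidableEq V]
    (G : SimpleGraph V)
    (hdeg : ∀ v, (G.neighborSet v).ncard = 1 ∨ (G.neighborSet v).ncard = 3) :
    ∃ F : SimpleGraph V, F ≤ G ∧ F.IsAcyclic ∧
      ∀ v, (F.neighborSet v).ncard = 1 ∨ (F.neighborSet v).ncard = 3 := by
    classical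
  have hodd : ∀ v, Odd ((G.neighborSet v).ncard) := by
    intro v; rcases hdeg v with h | h <;> rw [h] <;> decide
  obtain ⟨F, hle, hac, hF⟩ := exists_forest_parity G.edgeSet.ncard G (fun _ => True) le_rfl
    (fun w => by simpa using comp_even G hodd w)
  refine ⟨F, hle, hac, fun v => ?_⟩
  have h1 : Odd ((F.neighborSet v).ncard) := (hF v).mpr trivial
  have h2 : (F.neighborSet v).ncard ≤ (G.neighborSet v).ncard :=
    Set.ncard_le_ncard (fun x hx => hle hx) (Set.toFinite _)
  have h3 : (G.neighborSet v).ncard ≤ 3 := by rcases hdeg v with h | h <;> omega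
  rw [Nat.odd_iff] at h1
  omega
end
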